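/- arXiv:2407.03855 — 12 statements merged into one kernel-verified Lean document; each statement's English description precedes it below -/
import Mathlib

section
/- Let x, y ∈ ℝⁿ with y ≠ 0 and let φ, φ_s, φ_ss be real numbers with φ ≠ 0, φ − sφ_s ≠ 0 and Λ := φ − sφ_s + (r²−s²)φ_ss ≠ 0. Then the matrices (g_{jk}) and (g^{jk}) are mutually inverse: Σ_j g_{ij} g^{jk} = δ_i^k for all i, k. -/
open RealInnerProductSpace

set_option maxHeartbeats 2000000

/-- Under φ ≠ 0, φ − sφ_s ≠ 0 and Λ = φ − sφ_s + (r²−s²)φ_ss ≠ 0,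
the matrices (g_{jk}) and (g^{jk}) of a spherically symmetric metric are mutually
inverse: Σ_j g_{ij} g^{jk} = δ_i^k. -/
theorem stmt_3 (n : ℕ) (x y : EuclideanSpace ℝ (Fin n)) (hy : y ≠ 0)
    (u r s φ φs φss : ℝ)
    (hu : u = ‖y‖) (hr : r = ‖x‖) (hs : s = ⟪x, y⟫ / u)
    (hφ : φ ≠ 0) (h1 : φ - s * φs ≠ 0)
    (hΛ : φ - s * φs + (r ^ 2 - s ^ 2) * φss ≠ 0)
    (σ0 σ1 σ2 σ3 ρ0 ρ1 ρ2 ρ3 : ℝ)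
    (hσ0 : σ0 = φ * (φ - s * φs))
    (hσ1 : σ1 = φs ^ 2 + φ * φss)
    (hσ2 : σ2 = (φ - s * φs) * φs - s * φ * φss)
    (hσ3 : σ3 = s ^ 2 * φ * φss - s * (φ - s * φs) * φs)
    (hρ0 : ρ0 = 1 / (φ * (φ - s * φs)))
    (hρ1 : ρ1 = (s * φ + (r ^ 2 - s ^ 2) * φs) * (φ * φs - s * φs ^ 2 - s * φ * φss) /
      (φ ^ 3 * (φ - s * φs) * (φ - s * φs + (r ^ 2 - s ^ 2) * φss)))
    (hρ2 : ρ2 = -(φ * φs - s * φs ^ 2 - s * φ * φss) /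
      (φ ^ 2 * (φ - s * φs) * (φ - s * φs + (r ^ 2 - s ^ 2) * φss)))
    (hρ3 : ρ3 = -φss / (φ * (φ - s * φs) * (φ - s * φs + (r ^ 2 - s ^ 2) * φss)))
    (g ginv : Matrix (Fin n) (Fin n) ℝ)
    (hg : ∀ j k, g j k = σ0 * (if j = k then 1 else 0) + σ1 * x j * x k +
      σ2 / u * (x j * y k + x k * y j) + σ3 / u ^ 2 * (y j * y k))
    (hginv : ∀ j k, ginv j k = ρ0 * (if j = k then 1 else 0) + ρ1 / u ^ 2 * (y j * y k) +
      ρ2 / u * (x j * y k + x k * y j) + ρ3 * (x j * x k)) :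
    ∀ i k, ∑ j, g i j * ginv j k = if i = k then 1 else 0 := by
  intro i k
  have hu0 : u ≠ 0 := by
    rw [hu]; simpa using hy
  have hinner : ∑ j, x j * y j = s * u := by
    have h : ⟪x, y⟫ = ∑ j, x j * y j := by
      simp [PiLp.inner_apply, RCLike.inner_apply, starRingEnd_apply, mul_comm]
    rw [← h, hs]; field_simp
  have hxx : ∑ j, x j * x j = r ^ 2 := by
    rw [hr, EuclideanSpace.norm_sq_eq]
    simp [sq]
  have hyy : ∑ j, y j * y j = u ^ 2 := by
    rw [hu, EuclideanSpace.norm_sq_eq]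
    simp [sq]
  have key : ∀ j, g i j * ginv j k =
      σ0 * ρ0 * ((if i = j then (1:ℝ) else 0) * (if j = k then (1:ℝ) else 0))
    + (if i = j then (1:ℝ) else 0) *
        (σ0 * (ρ1/u^2*(y j*y k)+ρ2/u*(x j*y k + x k*y j)+ρ3*(x j*x k)))
    + (if j = k then (1:ℝ) else 0) *
        (ρ0 * (σ1*x i*x j + σ2/u*(x i*y j + x j*y i)+σ3/u^2*(y i*y j)))
    + ((σ1*x i + σ2/u*y i)*(ρ2/u*y k + ρ3*x k)) * (x j * x j)
    + ((σ1*x i + σ2/u*y i)*(ρ1/u^2*y k + ρ2/u*x k)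
        + (σ2/u*x i + σ3/u^2*y i)*(ρ2/u*y k + ρ3*x k)) * (x j * y j)
    + ((σ2/u*x i + σ3/u^2*y i)*(ρ1/u^2*y k + ρ2/u*x k)) * (y j * y j) := by
    intro j
    rw [hg, hginv]
    ring
  rw [Finset.sum_congr rfl fun j _ => key j]
  simp only [Finset.sum_add_distrib, ← Finset.mul_sum, ite_mul, one_mul, zero_mul,
    Finset.sum_ite_eq, Finset.sum_ite_eq', Finset.mem_univ, if_true]
  rw [hxx, hinner, hyy]
  have h00 : σ0 * ρ0 = 1 := by rw [hσ0, hρ0]; field_simp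
  have hA : σ0*ρ3 + ρ0*σ1 + σ1*ρ3*r^2 + (σ1*(ρ2/u) + (σ2/u)*ρ3)*(s*u)
      + (σ2/u)*(ρ2/u)*u^2 = 0 := by
    rw [hσ0, hσ1, hσ2, hρ0, hρ2, hρ3]
    have hL : φ - s * φs + (r ^ 2 - s ^ 2) * φss = φ - s * φs - s ^ 2 * φss + φss * r ^ 2 := by ring
    rw [hL] at hΛ ⊢
    field_simp; ring
  have hB : σ0*(ρ2/u) + ρ0*(σ2/u) + σ1*(ρ2/u)*r^2 + (σ1*(ρ1/u^2) + (σ2/u)*(ρ2/u))*(s*u)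
      + (σ2/u)*(ρ1/u^2)*u^2 = 0 := by
    rw [hσ0, hσ1, hσ2, hρ0, hρ1, hρ2]
    have hL : φ - s * φs + (r ^ 2 - s ^ 2) * φss = φ - s * φs - s ^ 2 * φss + φss * r ^ 2 := by ring
    rw [hL] at hΛ ⊢
    field_simp; ring
  have hC : σ0*(ρ2/u) + ρ0*(σ2/u) + (σ2/u)*ρ3*r^2 + ((σ2/u)*(ρ2/u) + (σ3/u^2)*ρ3)*(s*u)
      + (σ3/u^2)*(ρ2/u)*u^2 = 0 := by
    rw [hσ0, hσ2, hσ3, hρ0, hρ2, hρ3]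
    have hL : φ - s * φs + (r ^ 2 - s ^ 2) * φss = φ - s * φs - s ^ 2 * φss + φss * r ^ 2 := by ring
    rw [hL] at hΛ ⊢
    field_simp; ring
  have hD : σ0*(ρ1/u^2) + ρ0*(σ3/u^2) + (σ2/u)*(ρ2/u)*r^2
      + ((σ2/u)*(ρ1/u^2) + (σ3/u^2)*(ρ2/u))*(s*u) + (σ3/u^2)*(ρ1/u^2)*u^2 = 0 := by
    rw [hσ0, hσ2, hσ3, hρ0, hρ1, hρ2]
    have hL : φ - s * φs + (r ^ 2 - s ^ 2) * φss = φ - s * φs - s ^ 2 * φss + r ^ 2 * φss := by ring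
    rw [hL] at hΛ ⊢
    field_simp; ring
  linear_combination (if i = k then (1:ℝ) else 0) * h00 + (x i * x k) * hA +
    (x i * y k) * hB + (y i * x k) * hC + (y i * y k) * hD
end

section
/- Let n ≥ 2, let x, y ∈ ℝⁿ with y ≠ 0, and let φ, φ_s, φ_ss be arbitrary real numbers. Then the determinant of the n×n matrix (g_{jk}) equals φ^{n+1}(φ − sφ_s)^{n−2}(φ − sφ_s + (r²−s²)φ_ss). -/
open RealInnerProductSpace

lemma sylvester {m n : ℕ} (hmn : m ≤ n) (A : Matrix (Fin n) (Fin m) ℝ)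
    (B : Matrix (Fin m) (Fin n) ℝ) (c : ℝ) :
    (c • (1 : Matrix (Fin n) (Fin n) ℝ) + A * B).det
      = c ^ (n - m) * (c • (1 : Matrix (Fin m) (Fin m) ℝ) + B * A).det := by
  have key : (fun c : ℝ => (c • (1 : Matrix (Fin n) (Fin n) ℝ) + A * B).det)
      = fun c : ℝ => c ^ (n - m) * (c • (1 : Matrix (Fin m) (Fin m) ℝ) + B * A).det := by
    apply Continuous.ext_on (dense_compl_singleton (0 : ℝ))
    · exact Continuous.matrix_det (by continuity)
    · exact (continuous_pow _).mul (Continuous.matrix_det (by continuity))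
    · intro c hc
      have hc0 : c ≠ 0 := hc
      have h1 : c • (1 : Matrix (Fin n) (Fin n) ℝ) + A * B
          = c • ((1 : Matrix (Fin n) (Fin n) ℝ) + A * (c⁻¹ • B)) := by
        rw [smul_add, Matrix.mul_smul, smul_smul, mul_inv_cancel₀ hc0, one_smul]
      have h2 : (1 : Matrix (Fin m) (Fin m) ℝ) + (c⁻¹ • B) * A
          = c⁻¹ • (c • (1 : Matrix (Fin m) (Fin m) ℝ) + B * A) := by
        rw [smul_add, smul_smul, inv_mul_cancel₀ hc0, one_smul, Matrix.smul_mul]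
      simp only [h1, Matrix.det_smul, Matrix.det_one_add_mul_comm, h2,
        Fintype.card_fin, inv_pow]
      rw [← mul_assoc]
      congr 1
      field_simp
      rw [← pow_add]
      congr 1
      omega
  exact congrFun key c

/-- For n ≥ 2 and arbitrary real numbers φ, φ_s, φ_ss,
det(g_{jk}) = φ^{n+1}(φ − sφ_s)^{n−2}(φ − sφ_s + (r²−s²)φ_ss). -/
theorem stmt_4 (n : ℕ) (hn : 2 ≤ n) (x y : EuclideanSpace ℝ (Fin n)) (hy : y ≠ 0)
    (u r s φ φs φss : ℝ)
    (hu : u = ‖y‖) (hr : r = ‖x‖) (hs : s = ⟪x, y⟫ / u)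
    (σ0 σ1 σ2 σ3 : ℝ)
    (hσ0 : σ0 = φ * (φ - s * φs))
    (hσ1 : σ1 = φs ^ 2 + φ * φss)
    (hσ2 : σ2 = (φ - s * φs) * φs - s * φ * φss)
    (hσ3 : σ3 = s ^ 2 * φ * φss - s * (φ - s * φs) * φs)
    (g : Matrix (Fin n) (Fin n) ℝ)
    (hg : ∀ j k, g j k = σ0 * (if j = k then 1 else 0) + σ1 * x j * x k +
      σ2 / u * (x j * y k + x k * y j) + σ3 / u ^ 2 * (y j * y k)) :
    g.det = φ ^ (n + 1) * (φ - s * φs) ^ (n - 2) *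
      (φ - s * φs + (r ^ 2 - s ^ 2) * φss) := by
  have hu0 : u ≠ 0 := by rw [hu]; exact norm_ne_zero_iff.mpr hy
  -- inner product facts
  have hx2 : ∑ j, x j * x j = r ^ 2 := by
    rw [hr, ← real_inner_self_eq_norm_sq, PiLp.inner_apply]
    simp [RCLike.inner_apply, sq]
  have hy2 : ∑ j, y j * y j = u ^ 2 := by
    rw [hu, ← real_inner_self_eq_norm_sq, PiLp.inner_apply]
    simp [RCLike.inner_apply, sq]
  have hxy : ∑ j, x j * y j = s * u := by
    have : ⟪x, y⟫ = ∑ j, x j * y j := by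
      rw [PiLp.inner_apply]; simp [RCLike.inner_apply]; exact Finset.sum_congr rfl (fun _ _ => mul_comm _ _)
    rw [← this, hs]
    field_simp
  -- the rank-2 factorization
  set A : Matrix (Fin n) (Fin 2) ℝ :=
    Matrix.of (fun j i => if i = 0 then x j else y j / u) with hA
  set B : Matrix (Fin 2) (Fin n) ℝ :=
    Matrix.of (fun i k => if i = 0 then σ1 * x k + σ2 * (y k / u)
      else σ2 * x k + σ3 * (y k / u)) with hB
  have hgAB : g = σ0 • (1 : Matrix (Fin n) (Fin n) ℝ) + A * B := by
    ext j k
    rw [hg]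
    simp only [Matrix.add_apply, Matrix.smul_apply, Matrix.one_apply, Matrix.mul_apply,
      Fin.sum_univ_two, hA, hB, Matrix.of_apply, smul_eq_mul]
    norm_num
    by_cases h : j = k <;> simp [h] <;> field_simp <;> ring
  have hBA : B * A = Matrix.of ![![σ1 * r ^ 2 + σ2 * s, σ1 * s + σ2],
      ![σ2 * r ^ 2 + σ3 * s, σ2 * s + σ3]] := by
    ext i k
    rw [Matrix.mul_apply]
    fin_cases i <;> fin_cases k <;>
      simp only [hA, hB, Matrix.of_apply, Fin.isValue] <;>
      norm_num [Matrix.cons_val_zero, Matrix.cons_val_one, Matrix.head_cons]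
    · calc ∑ k, (σ1 * x k + σ2 * (y k / u)) * x k
          = σ1 * (∑ k, x k * x k) + σ2 / u * (∑ k, x k * y k) := by
            rw [Finset.mul_sum, Finset.mul_sum, ← Finset.sum_add_distrib]
            apply Finset.sum_congr rfl; intro k _; field_simp
        _ = σ1 * r ^ 2 + σ2 * s := by rw [hx2, hxy]; field_simp
    · calc ∑ k, (σ1 * x k + σ2 * (y k / u)) * (y k / u)
          = σ1 / u * (∑ k, x k * y k) + σ2 / u ^ 2 * (∑ k, y k * y k) := by
            rw [Finset.mul_sum, Finset.mul_sum, ← Finset.sum_add_distrib]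
            apply Finset.sum_congr rfl; intro k _; field_simp
        _ = σ1 * s + σ2 := by rw [hxy, hy2]; field_simp
    · calc ∑ k, (σ2 * x k + σ3 * (y k / u)) * x k
          = σ2 * (∑ k, x k * x k) + σ3 / u * (∑ k, x k * y k) := by
            rw [Finset.mul_sum, Finset.mul_sum, ← Finset.sum_add_distrib]
            apply Finset.sum_congr rfl; intro k _; field_simp
        _ = σ2 * r ^ 2 + σ3 * s := by rw [hx2, hxy]; field_simp
    · calc ∑ k, (σ2 * x k + σ3 * (y k / u)) * (y k / u)
          = σ2 / u * (∑ k, x k * y k) + σ3 / u ^ 2 * (∑ k, y k * y k) := by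
            rw [Finset.mul_sum, Finset.mul_sum, ← Finset.sum_add_distrib]
            apply Finset.sum_congr rfl; intro k _; field_simp
        _ = σ2 * s + σ3 := by rw [hxy, hy2]; field_simp
  obtain ⟨m, rfl⟩ : ∃ m, n = m + 2 := ⟨n - 2, by omega⟩
  rw [hgAB, sylvester (by omega) A B σ0, hBA]
  rw [Matrix.det_fin_two]
  simp only [Matrix.add_apply, Matrix.smul_apply, Matrix.one_apply, Matrix.of_apply,
    Matrix.cons_val', Matrix.cons_val_zero, Matrix.cons_val_one, Matrix.head_cons,
    Matrix.empty_val', Matrix.cons_val_fin_one, Matrix.head_fin_const, smul_eq_mul]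
  norm_num
  rw [hσ0, hσ1, hσ2, hσ3]
  have hD : (φ * (φ - s * φs) + ((φs ^ 2 + φ * φss) * r ^ 2 + ((φ - s * φs) * φs - s * φ * φss) * s)) *
      (φ * (φ - s * φs) + (((φ - s * φs) * φs - s * φ * φss) * s + (s ^ 2 * φ * φss - s * (φ - s * φs) * φs)))
      - ((φs ^ 2 + φ * φss) * s + ((φ - s * φs) * φs - s * φ * φss)) *
        (((φ - s * φs) * φs - s * φ * φss) * r ^ 2 + (s ^ 2 * φ * φss - s * (φ - s * φs) * φs) * s)
      = φ ^ 3 * (φ - s * φs + (r ^ 2 - s ^ 2) * φss) := by ring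
  rw [mul_pow, hD]
  ring
end

section
/- Let x, y ∈ ℝⁿ be linearly independent with y ≠ 0, let φ, φ_s be real numbers, and let R₁, R₂, R₃, R₄, R₅ be real numbers satisfying R₄ = −sR₃ and R₂ = −R₁ − sR₅. Define R^i_j = u²R₁δ^i_j + R₂ y^i y_j + u²R₃ x^i x_j + uR₄ x^i y_j + uR₅ x_j y^i and ℓ_i = (φ/u) y_i + φ_s n_i. If Σ_i R^i_j ℓ_i = 0 for every j (the condition d_R F = 0 for F = uφ), then the curvature compatibility condition φ_s R₁ + (sφ + (r²−s²)φ_s) R₃ + φ R₅ = 0 holds. -/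
open RealInnerProductSpace

/-- If x, y are linearly independent, R₄ = −sR₃, R₂ = −R₁ − sR₅,
R^i_j = u²R₁δ^i_j + R₂ y^i y_j + u²R₃ x^i x_j + uR₄ x^i y_j + uR₅ x_j y^i,
ℓ_i = (φ/u)y_i + φ_s n_i, and Σ_i R^i_j ℓ_i = 0 for every j, then the curvature
compatibility condition φ_s R₁ + (sφ + (r²−s²)φ_s)R₃ + φR₅ = 0 holds. -/
theorem stmt_6 (d : ℕ) (x y : EuclideanSpace ℝ (Fin d)) (hy : y ≠ 0)
    (hxy : LinearIndependent ℝ ![x, y])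
    (u r s φ φs R1 R2 R3 R4 R5 : ℝ)
    (hu : u = ‖y‖) (hr : r = ‖x‖) (hs : s = ⟪x, y⟫ / u)
    (hR4 : R4 = -s * R3) (hR2 : R2 = -R1 - s * R5)
    (nv : Fin d → ℝ) (hnv : ∀ i, nv i = x i - s / u * y i)
    (R : Fin d → Fin d → ℝ)
    (hR : ∀ i j, R i j = u ^ 2 * R1 * (if i = j then 1 else 0) + R2 * y i * y j +
      u ^ 2 * R3 * x i * x j + u * R4 * x i * y j + u * R5 * x j * y i)
    (ℓ : Fin d → ℝ) (hℓ : ∀ i, ℓ i = φ / u * y i + φs * nv i)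
    (hdRF : ∀ j, ∑ i, R i j * ℓ i = 0) :
    φs * R1 + (s * φ + (r ^ 2 - s ^ 2) * φs) * R3 + φ * R5 = 0 := by
  have hu0 : u ≠ 0 := by rw [hu]; exact norm_ne_zero_iff.mpr hy
  have hip : ⟪x, y⟫ = ∑ i, x i * y i := by
    simp [PiLp.inner_apply, RCLike.inner_apply, mul_comm]
  have hxyip : ∑ i, x i * y i = s * u := by
    rw [← hip, hs]; field_simp
  have hxx : ∑ i, x i * x i = r ^ 2 := by
    have h1 : ⟪x, x⟫ = ∑ i, x i * x i := by
      simp only [PiLp.inner_apply, RCLike.inner_apply, conj_trivial]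
    rw [← h1, real_inner_self_eq_norm_sq, hr]
  have hyy : ∑ i, y i * y i = u ^ 2 := by
    have h1 : ⟪y, y⟫ = ∑ i, y i * y i := by
      simp only [PiLp.inner_apply, RCLike.inner_apply, conj_trivial]
    rw [← h1, real_inner_self_eq_norm_sq, hu]
  have hSy : ∑ i, y i * ℓ i = φ * u := by
    have hterm : ∀ i, y i * ℓ i = φ / u * (y i * y i) + φs * (x i * y i)
        - φs * s / u * (y i * y i) := by
      intro i; rw [hℓ, hnv]; ring
    rw [Finset.sum_congr rfl fun i _ => hterm i]
    rw [Finset.sum_sub_distrib, Finset.sum_add_distrib, ← Finset.mul_sum,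
      ← Finset.mul_sum, ← Finset.mul_sum, hyy, hxyip]
    field_simp
    ring
  have hSx : ∑ i, x i * ℓ i = s * φ + (r ^ 2 - s ^ 2) * φs := by
    have hterm : ∀ i, x i * ℓ i = φ / u * (x i * y i) + φs * (x i * x i)
        - φs * s / u * (x i * y i) := by
      intro i; rw [hℓ, hnv]; ring
    rw [Finset.sum_congr rfl fun i _ => hterm i]
    rw [Finset.sum_sub_distrib, Finset.sum_add_distrib, ← Finset.mul_sum,
      ← Finset.mul_sum, ← Finset.mul_sum, hxx, hxyip]
    field_simp
    ring
  set cx := u ^ 2 * R1 * φs + u ^ 2 * R3 * (s * φ + (r ^ 2 - s ^ 2) * φs) + u * R5 * (φ * u) with hcx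
  set cy := u * R1 * (φ - s * φs) + R2 * (φ * u) + u * R4 * (s * φ + (r ^ 2 - s ^ 2) * φs) with hcy
  have key : ∀ j, cx * x j + cy * y j = 0 := by
    intro j
    have h := hdRF j
    have hterm : ∀ i, R i j * ℓ i =
        (if i = j then u ^ 2 * R1 * ℓ i else 0) + R2 * y j * (y i * ℓ i)
        + u ^ 2 * R3 * x j * (x i * ℓ i) + u * R4 * y j * (x i * ℓ i)
        + u * R5 * x j * (y i * ℓ i) := by
      intro i; rw [hR]; split_ifs <;> ring
    rw [Finset.sum_congr rfl fun i _ => hterm i] at h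
    simp only [Finset.sum_add_distrib, ← Finset.mul_sum, Finset.sum_ite_eq',
      Finset.mem_univ, if_true] at h
    rw [hSx, hSy, hℓ j, hnv j] at h
    field_simp at h
    have h2 : u * (cx * x j + cy * y j) = 0 := by
      rw [hcx, hcy]; linear_combination u * h
    exact (mul_eq_zero.mp h2).resolve_left hu0
  have hv : cx • x + cy • y = 0 := by
    ext j
    simpa using key j
  have hcx0 : cx = 0 := ((LinearIndependent.pair_iff.mp hxy) cx cy hv).1
  have h2 : u ^ 2 * (φs * R1 + (s * φ + (r ^ 2 - s ^ 2) * φs) * R3 + φ * R5) = 0 := by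
    rw [hcx] at hcx0; linear_combination hcx0
  exact (mul_eq_zero.mp h2).resolve_left (pow_ne_zero 2 hu0)
end

section
/- Let n ≥ 3, let x, y ∈ ℝⁿ be linearly independent with y ≠ 0, let φ, φ_s, K be real numbers, and let R₁,…,R₅ be real numbers satisfying R₄ = −sR₃ and R₂ = −R₁ − sR₅. Suppose that for all i, j one has u²R₁δ^i_j + R₂ y^i y_j + u²R₃ x^i x_j + uR₄ x^i y_j + uR₅ x_j y^i = Kφ²u² δ^i_j − Kφ(φ y_j + u φ_s n_j) y^i (i.e. the Riemann curvature has the scalar-curvature form R^i_j = KF²(δ^i_j − (y^i/F)∂F/∂y^j) with F = uφ). Then R₁ = Kφ² and R₃ = 0. -/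
open RealInnerProductSpace

/-- For n ≥ 3, x, y linearly independent, R₄ = −sR₃, R₂ = −R₁ − sR₅,
if u²R₁δ^i_j + R₂ y^i y_j + u²R₃ x^i x_j + uR₄ x^i y_j + uR₅ x_j y^i
= Kφ²u² δ^i_j − Kφ(φ y_j + u φ_s n_j) y^i for all i, j, then R₁ = Kφ² and R₃ = 0. -/
theorem stmt_7 (d : ℕ) (hd : 3 ≤ d) (x y : EuclideanSpace ℝ (Fin d)) (hy : y ≠ 0)
    (hxy : LinearIndependent ℝ ![x, y])
    (u r s φ φs K R1 R2 R3 R4 R5 : ℝ)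
    (hu : u = ‖y‖) (hr : r = ‖x‖) (hs : s = ⟪x, y⟫ / u)
    (hR4 : R4 = -s * R3) (hR2 : R2 = -R1 - s * R5)
    (nv : Fin d → ℝ) (hnv : ∀ i, nv i = x i - s / u * y i)
    (hscalar : ∀ i j, u ^ 2 * R1 * (if i = j then 1 else 0) + R2 * y i * y j +
      u ^ 2 * R3 * x i * x j + u * R4 * x i * y j + u * R5 * x j * y i =
      K * φ ^ 2 * u ^ 2 * (if i = j then 1 else 0) -
        K * φ * (φ * y j + u * φs * nv j) * y i) :
    R1 = K * φ ^ 2 ∧ R3 = 0 := by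
  classical
  have hu0 : u ≠ 0 := by rw [hu]; simpa using hy
  -- contraction of the curvature identity with two vectors
  have key : ∀ a b : Fin d → ℝ,
      u ^ 2 * R1 * (∑ i, a i * b i)
        + R2 * (∑ i, y i * a i) * (∑ i, y i * b i)
        + u ^ 2 * R3 * (∑ i, x i * a i) * (∑ i, x i * b i)
        + u * R4 * (∑ i, x i * a i) * (∑ i, y i * b i)
        + u * R5 * (∑ i, x i * b i) * (∑ i, y i * a i)
      = K * φ ^ 2 * u ^ 2 * (∑ i, a i * b i)
        - K * φ * (φ * (∑ i, y i * b i) + u * φs * (∑ i, nv i * b i)) *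
            (∑ i, y i * a i) := by
    intro a b
    have step : ∀ i : Fin d,
        u ^ 2 * R1 * b i + R2 * y i * (∑ j, y j * b j)
          + u ^ 2 * R3 * x i * (∑ j, x j * b j)
          + u * R4 * x i * (∑ j, y j * b j)
          + u * R5 * (∑ j, x j * b j) * y i
        = K * φ ^ 2 * u ^ 2 * b i
          - K * φ * (φ * (∑ j, y j * b j) + u * φs * (∑ j, nv j * b j)) * y i := by
      intro i
      have h2 :
          ∑ j, ((u ^ 2 * R1) * ((if i = j then (1:ℝ) else 0) * b j)
              + (R2 * y i) * (y j * b j)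
              + (u ^ 2 * R3 * x i) * (x j * b j)
              + (u * R4 * x i) * (y j * b j)
              + (u * R5 * y i) * (x j * b j))
          = ∑ j, ((K * φ ^ 2 * u ^ 2) * ((if i = j then (1:ℝ) else 0) * b j)
              - ((K * φ * φ * y i) * (y j * b j)
                + (K * φ * u * φs * y i) * (nv j * b j))) := by
        refine Finset.sum_congr rfl fun j _ => ?_
        have h := hscalar i j
        have h' := congrArg (· * b j) h
        simp only at h'
        linear_combination h'
      simp only [Finset.sum_add_distrib, Finset.sum_sub_distrib,
        ← Finset.mul_sum, ite_mul, one_mul, zero_mul,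
        Finset.sum_ite_eq, Finset.mem_univ, if_true] at h2
      linear_combination h2
    have h3 :
        ∑ i, ((u ^ 2 * R1) * (a i * b i)
            + (R2 * (∑ j, y j * b j)) * (y i * a i)
            + (u ^ 2 * R3 * (∑ j, x j * b j)) * (x i * a i)
            + (u * R4 * (∑ j, y j * b j)) * (x i * a i)
            + (u * R5 * (∑ j, x j * b j)) * (y i * a i))
        = ∑ i, ((K * φ ^ 2 * u ^ 2) * (a i * b i)
            - (K * φ * (φ * (∑ j, y j * b j) + u * φs * (∑ j, nv j * b j))) *
                (y i * a i)) := by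
      refine Finset.sum_congr rfl fun i _ => ?_
      have h := step i
      have h' := congrArg (· * a i) h
      simp only at h'
      linear_combination h'
    simp only [Finset.sum_add_distrib, Finset.sum_sub_distrib,
      ← Finset.mul_sum] at h3
    linear_combination h3
  -- a vector orthogonal to both x and y
  set W : Submodule ℝ (EuclideanSpace ℝ (Fin d)) :=
    Submodule.span ℝ (Set.range ![x, y]) with hW
  have hxW : x ∈ W := Submodule.subset_span ⟨0, rfl⟩
  have hyW : y ∈ W := Submodule.subset_span ⟨1, rfl⟩
  have hrank : Module.finrank ℝ W = 2 := by
    rw [hW, finrank_span_eq_card hxy]; simp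
  have hWbot : Wᗮ ≠ ⊥ := by
    intro hbot
    have h := Submodule.finrank_add_finrank_orthogonal (K := W)
    rw [hbot, hrank] at h
    simp [finrank_euclideanSpace_fin] at h
    omega
  obtain ⟨v, hvW, hv0⟩ := Submodule.exists_mem_ne_zero_of_ne_bot hWbot
  have hxv : ⟪x, v⟫ = 0 := Submodule.inner_right_of_mem_orthogonal hxW hvW
  have hyv : ⟪y, v⟫ = 0 := Submodule.inner_right_of_mem_orthogonal hyW hvW
  have sxv : ∑ i, x i * v i = 0 := by
    simpa [PiLp.inner_apply, RCLike.inner_apply, conj_trivial, mul_comm] using hxv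
  have syv : ∑ i, y i * v i = 0 := by
    simpa [PiLp.inner_apply, RCLike.inner_apply, conj_trivial, mul_comm] using hyv
  have snv : ∑ i, nv i * v i = 0 := by
    have : ∀ i, nv i * v i = x i * v i - s / u * (y i * v i) := by
      intro i; rw [hnv i]; ring
    rw [Finset.sum_congr rfl fun i _ => this i]
    rw [Finset.sum_sub_distrib, ← Finset.mul_sum, sxv, syv]
    ring
  have hsvv : (∑ i, v i * v i) ≠ 0 := by
    have h : ⟪v, v⟫ ≠ 0 := inner_self_ne_zero.mpr hv0
    simpa only [PiLp.inner_apply, RCLike.inner_apply, conj_trivial] using h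
  have hk1 := key v v
  rw [sxv, syv, snv] at hk1
  have hR1 : R1 = K * φ ^ 2 := by
    have h5 : (R1 - K * φ ^ 2) * (u ^ 2 * ∑ i, v i * v i) = 0 := by
      linear_combination hk1
    have hne : u ^ 2 * (∑ i, v i * v i) ≠ 0 :=
      mul_ne_zero (pow_ne_zero _ hu0) hsvv
    have := (mul_eq_zero.mp h5).resolve_right hne
    linarith
  refine ⟨hR1, ?_⟩
  -- a vector orthogonal to y but not to x
  have hyn : ‖y‖ ≠ 0 := by simpa using hy
  set c : ℝ := ⟪x, y⟫ / ‖y‖ ^ 2 with hc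
  set w : EuclideanSpace ℝ (Fin d) := x - c • y with hwdef
  have hwy : ⟪y, w⟫ = 0 := by
    rw [hwdef, inner_sub_right, real_inner_smul_right, hc,
      real_inner_self_eq_norm_sq, real_inner_comm]
    field_simp
    ring
  have hw0 : w ≠ 0 := by
    intro h0
    have hx : x = c • y := by rwa [hwdef, sub_eq_zero] at h0
    exact (linearIndependent_fin2.mp hxy).2 c hx.symm
  have hwx : ⟪x, w⟫ ≠ 0 := by
    have hx : x = w + c • y := by rw [hwdef]; abel
    have : ⟪x, w⟫ = ‖w‖ ^ 2 := by
      rw [hx, inner_add_left, real_inner_smul_left, hwy,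
        real_inner_self_eq_norm_sq]
      ring
    rw [this]
    exact pow_ne_zero 2 (norm_ne_zero_iff.mpr hw0)
  have syw : ∑ i, y i * w i = 0 := by
    simpa [PiLp.inner_apply, RCLike.inner_apply, conj_trivial, mul_comm] using hwy
  have sxw : (∑ i, x i * w i) ≠ 0 := by
    have : ⟪x, w⟫ = ∑ i, x i * w i := by
      simp [PiLp.inner_apply, RCLike.inner_apply, conj_trivial, mul_comm]
    rwa [this] at hwx
  have hk2 := key w w
  rw [syw, hR1] at hk2
  have h6 : R3 * (u ^ 2 * ((∑ i, x i * w i) * (∑ i, x i * w i))) = 0 := by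
    linear_combination hk2
  have hne : u ^ 2 * ((∑ i, x i * w i) * (∑ i, x i * w i)) ≠ 0 :=
    mul_ne_zero (pow_ne_zero _ hu0) (mul_ne_zero sxw sxw)
  exact (mul_eq_zero.mp h6).resolve_right hne
end

section
/- Let x, y ∈ ℝⁿ with y ≠ 0, let φ ≠ 0, φ_s, K be real numbers, and let R₁,…,R₅ be real numbers satisfying R₁ = Kφ², R₃ = 0, R₄ = −sR₃, R₂ = −R₁ − sR₅, and the curvature compatibility condition φ_s R₁ + (sφ + (r²−s²)φ_s)R₃ + φR₅ = 0. Then for all i, j: u²R₁δ^i_j + R₂ y^i y_j + u²R₃ x^i x_j + uR₄ x^i y_j + uR₅ x_j y^i = Kφ²u² δ^i_j − Kφ(φ y_j + u φ_s n_j) y^i; that is, the Riemann curvature has the scalar-curvature form R^i_j = KF²(δ^i_j − (y^i/F)∂F/∂y^j) with F = uφ. -/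
open RealInnerProductSpace

/-- If φ ≠ 0, R₁ = Kφ², R₃ = 0, R₄ = −sR₃, R₂ = −R₁ − sR₅, and the
curvature compatibility condition φ_s R₁ + (sφ + (r²−s²)φ_s)R₃ + φR₅ = 0 holds,
then for all i, j the Riemann curvature has the scalar-curvature form:
u²R₁δ^i_j + R₂ y^i y_j + u²R₃ x^i x_j + uR₄ x^i y_j + uR₅ x_j y^i
= Kφ²u² δ^i_j − Kφ(φ y_j + u φ_s n_j) y^i. -/
theorem stmt_8 (d : ℕ) (x y : EuclideanSpace ℝ (Fin d)) (hy : y ≠ 0)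
    (u r s φ φs K R1 R2 R3 R4 R5 : ℝ)
    (hu : u = ‖y‖) (hr : r = ‖x‖) (hs : s = ⟪x, y⟫ / u)
    (hφ : φ ≠ 0)
    (hR1 : R1 = K * φ ^ 2) (hR3 : R3 = 0)
    (hR4 : R4 = -s * R3) (hR2 : R2 = -R1 - s * R5)
    (hcomp : φs * R1 + (s * φ + (r ^ 2 - s ^ 2) * φs) * R3 + φ * R5 = 0)
    (nv : Fin d → ℝ) (hnv : ∀ i, nv i = x i - s / u * y i) :
    ∀ i j, u ^ 2 * R1 * (if i = j then 1 else 0) + R2 * y i * y j +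
      u ^ 2 * R3 * x i * x j + u * R4 * x i * y j + u * R5 * x j * y i =
      K * φ ^ 2 * u ^ 2 * (if i = j then 1 else 0) -
        K * φ * (φ * y j + u * φs * nv j) * y i := by
  intro i j
  have hu0 : u ≠ 0 := by
    rw [hu]; simpa using hy
  have h5 : R5 = -(K * φ * φs) := by
    subst hR1 hR3
    have h : φ * R5 = φ * (-(K * φ * φs)) := by linear_combination hcomp
    exact mul_left_cancel₀ hφ h
  subst hR3 hR4 hR2 hR1 h5
  rw [hnv j]
  split_ifs <;> field_simp <;> ring
end

section
/- Let x, y ∈ ℝⁿ with y ≠ 0 and let φ, φ_s, φ_ss be real numbers with φ ≠ 0, φ − sφ_s ≠ 0 and Λ := φ − sφ_s + (r²−s²)φ_ss ≠ 0. Define n^i := Σ_j g^{ij} n_j and ℓ_i = (φ/u)y_i + φ_s n_i. Then: (1) n^i = ρ₀ (x^i − (s/u)y^i) + ((r²−s²)/u)(ρ₂ y^i + u ρ₃ x^i) for every i; (2) Σ_i n^i ℓ_i = 0; (3) Σ_i n^i n_i = (r²−s²)/(φΛ). -/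
open RealInnerProductSpace

set_option maxHeartbeats 2000000 in
/-- With φ ≠ 0, φ − sφ_s ≠ 0, Λ ≠ 0, and n^i = Σ_j g^{ij} n_j,
ℓ_i = (φ/u)y_i + φ_s n_i, one has
(1) n^i = ρ₀(x^i − (s/u)y^i) + ((r²−s²)/u)(ρ₂ y^i + u ρ₃ x^i);
(2) Σ_i n^i ℓ_i = 0;  (3) Σ_i n^i n_i = (r²−s²)/(φΛ). -/
theorem stmt_9 (d : ℕ) (x y : EuclideanSpace ℝ (Fin d)) (hy : y ≠ 0)
    (u r s φ φs φss Λ : ℝ)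
    (hu : u = ‖y‖) (hr : r = ‖x‖) (hs : s = ⟪x, y⟫ / u)
    (hφ : φ ≠ 0) (h1 : φ - s * φs ≠ 0)
    (hΛdef : Λ = φ - s * φs + (r ^ 2 - s ^ 2) * φss) (hΛ : Λ ≠ 0)
    (ρ0 ρ1 ρ2 ρ3 : ℝ)
    (hρ0 : ρ0 = 1 / (φ * (φ - s * φs)))
    (hρ1 : ρ1 = (s * φ + (r ^ 2 - s ^ 2) * φs) * (φ * φs - s * φs ^ 2 - s * φ * φss) /
      (φ ^ 3 * (φ - s * φs) * Λ))
    (hρ2 : ρ2 = -(φ * φs - s * φs ^ 2 - s * φ * φss) / (φ ^ 2 * (φ - s * φs) * Λ))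
    (hρ3 : ρ3 = -φss / (φ * (φ - s * φs) * Λ))
    (ginv : Fin d → Fin d → ℝ)
    (hginv : ∀ j k, ginv j k = ρ0 * (if j = k then 1 else 0) + ρ1 / u ^ 2 * (y j * y k) +
      ρ2 / u * (x j * y k + x k * y j) + ρ3 * (x j * x k))
    (nv : Fin d → ℝ) (hnv : ∀ i, nv i = x i - s / u * y i)
    (nup : Fin d → ℝ) (hnup : ∀ i, nup i = ∑ j, ginv i j * nv j)
    (ℓ : Fin d → ℝ) (hℓ : ∀ i, ℓ i = φ / u * y i + φs * nv i) :
    (∀ i, nup i = ρ0 * (x i - s / u * y i) +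
      (r ^ 2 - s ^ 2) / u * (ρ2 * y i + u * ρ3 * x i)) ∧
    (∑ i, nup i * ℓ i = 0) ∧
    (∑ i, nup i * nv i = (r ^ 2 - s ^ 2) / (φ * Λ)) := by
  have hu0 : u ≠ 0 := by
    rw [hu]; exact norm_ne_zero_iff.mpr hy
  have hyy : ∑ i, y i * y i = u ^ 2 := by
    have := real_inner_self_eq_norm_sq y
    rw [PiLp.inner_apply] at this
    simpa [hu, RCLike.inner_apply, sq] using this
  have hxx : ∑ i, x i * x i = r ^ 2 := by
    have := real_inner_self_eq_norm_sq x
    rw [PiLp.inner_apply] at this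
    simpa [hr, RCLike.inner_apply, sq] using this
  have hxy : ∑ i, x i * y i = s * u := by
    have : ⟪x, y⟫ = s * u := by rw [hs]; field_simp
    rw [PiLp.inner_apply] at this
    simpa [RCLike.inner_apply, mul_comm] using this
  -- general bilinear sum formula
  have hsum : ∀ a b c e : ℝ, ∑ i, (a * x i + b * y i) * (c * x i + e * y i)
      = a * c * r ^ 2 + (a * e + b * c) * (s * u) + b * e * u ^ 2 := by
    intro a b c e
    have : ∀ i, (a * x i + b * y i) * (c * x i + e * y i)
        = a * c * (x i * x i) + (a * e + b * c) * (x i * y i) + b * e * (y i * y i) := by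
      intro i; ring
    rw [Finset.sum_congr rfl (fun i _ => this i)]
    rw [Finset.sum_add_distrib, Finset.sum_add_distrib, ← Finset.mul_sum, ← Finset.mul_sum,
      ← Finset.mul_sum, hxx, hxy, hyy]
  have hA : ∑ j, y j * nv j = 0 := by
    have : ∀ j, y j * nv j = (0 * x j + 1 * y j) * (1 * x j + (-(s/u)) * y j) := by
      intro j; rw [hnv]; ring
    rw [Finset.sum_congr rfl (fun j _ => this j), hsum]
    field_simp
    ring
  have hB : ∑ j, x j * nv j = r ^ 2 - s ^ 2 := by
    have : ∀ j, x j * nv j = (1 * x j + 0 * y j) * (1 * x j + (-(s/u)) * y j) := by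
      intro j; rw [hnv]; ring
    rw [Finset.sum_congr rfl (fun j _ => this j), hsum]
    field_simp
    ring
  have part1 : ∀ i, nup i = ρ0 * (x i - s / u * y i) +
      (r ^ 2 - s ^ 2) / u * (ρ2 * y i + u * ρ3 * x i) := by
    intro i
    rw [hnup]
    have expand : ∀ j, ginv i j * nv j =
        ρ0 * ((if i = j then 1 else 0) * nv j) + (ρ1 / u ^ 2 * y i) * (y j * nv j)
        + (ρ2 / u * x i) * (y j * nv j) + (ρ2 / u * y i) * (x j * nv j)
        + (ρ3 * x i) * (x j * nv j) := by
      intro j; rw [hginv]; ring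
    rw [Finset.sum_congr rfl (fun j _ => expand j)]
    rw [Finset.sum_add_distrib, Finset.sum_add_distrib, Finset.sum_add_distrib,
      Finset.sum_add_distrib, ← Finset.mul_sum, ← Finset.mul_sum, ← Finset.mul_sum,
      ← Finset.mul_sum, ← Finset.mul_sum, hA, hB]
    have hdelta : ∑ j, (if i = j then (1:ℝ) else 0) * nv j = nv i := by
      simp
    rw [hdelta, hnv]
    field_simp
    ring
  refine ⟨part1, ?_, ?_⟩
  · -- part 2
    have h2 : ∀ i, nup i * ℓ i =
        ((ρ0 + (r ^ 2 - s ^ 2) * ρ3) * x i + ((r ^ 2 - s ^ 2) * ρ2 / u - ρ0 * s / u) * y i) *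
        (φs * x i + (φ / u - φs * s / u) * y i) := by
      intro i
      rw [part1 i, hℓ i, hnv i]
      field_simp
      ring
    rw [Finset.sum_congr rfl (fun i _ => h2 i), hsum]
    clear h2 part1 hginv hnup hℓ hnv hA hB hsum hxx hxy hyy hs hu hr hρ1
    subst hΛdef hρ0 hρ2 hρ3
    field_simp
    ring
  · -- part 3
    have h3 : ∀ i, nup i * nv i =
        ((ρ0 + (r ^ 2 - s ^ 2) * ρ3) * x i + ((r ^ 2 - s ^ 2) * ρ2 / u - ρ0 * s / u) * y i) *
        (1 * x i + (-(s / u)) * y i) := by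
      intro i
      rw [part1 i, hnv i]
      field_simp
      ring
    rw [Finset.sum_congr rfl (fun i _ => h3 i), hsum]
    clear h3 part1 hginv hnup hℓ hnv hA hB hsum hxx hxy hyy hs hu hr hρ1
    subst hΛdef hρ0 hρ2 hρ3
    field_simp
    ring
end

section
/- Let x, y ∈ ℝ² be linearly independent, and let φ, φ_s, φ_ss be real numbers with φ > 0, φ − sφ_s ≠ 0 and Λ := φ − sφ_s + (r²−s²)φ_ss > 0. Set F = uφ, ℓ_i = (φ/u)y_i + φ_s n_i, a = √(φΛ/(r²−s²)), m_i = a n_i, and raise indices with g^{ij}: ℓ^i = Σ_j g^{ij}ℓ_j, m^i = Σ_j g^{ij}m_j. Then (ℓ^i, m^i) is the Berwald frame: (1) ℓ^i = y^i/F; (2) Σ_i ℓ^i ℓ_i = 1; (3) Σ_i ℓ^i m_i = 0 and Σ_i m^i ℓ_i = 0; (4) Σ_i m^i m_i = 1; (5) g_{ij} = ℓ_iℓ_j + m_im_j for all i, j. -/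
set_option maxHeartbeats 1000000

open RealInnerProductSpace

/-- For x, y ∈ ℝ² linearly independent, φ > 0, φ − sφ_s ≠ 0, Λ > 0,
with F = uφ, ℓ_i = (φ/u)y_i + φ_s n_i, a = √(φΛ/(r²−s²)), m_i = a n_i, and indices
raised by g^{ij}, the pair (ℓ^i, m^i) is the Berwald frame:
(1) ℓ^i = y^i/F; (2) Σ ℓ^iℓ_i = 1; (3) Σ ℓ^im_i = 0 and Σ m^iℓ_i = 0;
(4) Σ m^im_i = 1; (5) g_{ij} = ℓ_iℓ_j + m_im_j. -/
theorem stmt_12 (x y : EuclideanSpace ℝ (Fin 2))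
    (hxy : LinearIndependent ℝ ![x, y]) (hy : y ≠ 0)
    (u r s φ φs φss Λ F a : ℝ)
    (hu : u = ‖y‖) (hr : r = ‖x‖) (hs : s = ⟪x, y⟫ / u)
    (hφ : 0 < φ) (h1 : φ - s * φs ≠ 0)
    (hΛdef : Λ = φ - s * φs + (r ^ 2 - s ^ 2) * φss) (hΛ : 0 < Λ)
    (hF : F = u * φ) (ha : a = Real.sqrt (φ * Λ / (r ^ 2 - s ^ 2)))
    (σ0 σ1 σ2 σ3 ρ0 ρ1 ρ2 ρ3 : ℝ)
    (hσ0 : σ0 = φ * (φ - s * φs))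
    (hσ1 : σ1 = φs ^ 2 + φ * φss)
    (hσ2 : σ2 = (φ - s * φs) * φs - s * φ * φss)
    (hσ3 : σ3 = s ^ 2 * φ * φss - s * (φ - s * φs) * φs)
    (hρ0 : ρ0 = 1 / (φ * (φ - s * φs)))
    (hρ1 : ρ1 = (s * φ + (r ^ 2 - s ^ 2) * φs) * (φ * φs - s * φs ^ 2 - s * φ * φss) /
      (φ ^ 3 * (φ - s * φs) * Λ))
    (hρ2 : ρ2 = -(φ * φs - s * φs ^ 2 - s * φ * φss) / (φ ^ 2 * (φ - s * φs) * Λ))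
    (hρ3 : ρ3 = -φss / (φ * (φ - s * φs) * Λ))
    (g ginv : Fin 2 → Fin 2 → ℝ)
    (hg : ∀ j k, g j k = σ0 * (if j = k then 1 else 0) + σ1 * x j * x k +
      σ2 / u * (x j * y k + x k * y j) + σ3 / u ^ 2 * (y j * y k))
    (hginv : ∀ j k, ginv j k = ρ0 * (if j = k then 1 else 0) + ρ1 / u ^ 2 * (y j * y k) +
      ρ2 / u * (x j * y k + x k * y j) + ρ3 * (x j * x k))
    (nv ℓlow mlow ℓup mup : Fin 2 → ℝ)
    (hnv : ∀ i, nv i = x i - s / u * y i)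
    (hℓlow : ∀ i, ℓlow i = φ / u * y i + φs * nv i)
    (hmlow : ∀ i, mlow i = a * nv i)
    (hℓup : ∀ i, ℓup i = ∑ j, ginv i j * ℓlow j)
    (hmup : ∀ i, mup i = ∑ j, ginv i j * mlow j) :
    (∀ i, ℓup i = y i / F) ∧
    (∑ i, ℓup i * ℓlow i = 1) ∧
    ((∑ i, ℓup i * mlow i = 0) ∧ (∑ i, mup i * ℓlow i = 0)) ∧
    (∑ i, mup i * mlow i = 1) ∧
    (∀ i j, g i j = ℓlow i * ℓlow j + mlow i * mlow j) := by
  have hu0 : (0:ℝ) < u := hu ▸ norm_pos_iff.mpr hy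
  have hune : u ≠ 0 := hu0.ne'
  have hφne : φ ≠ 0 := hφ.ne'
  have hΛne : Λ ≠ 0 := hΛ.ne'
  -- basic coordinate relations
  have T1 : y 0 * y 0 + y 1 * y 1 = u ^ 2 := by
    have h : ⟪y, y⟫ = y 0 * y 0 + y 1 * y 1 := by
      simp only [PiLp.inner_apply, Fin.sum_univ_two, RCLike.inner_apply, conj_trivial]
    rw [hu, ← real_inner_self_eq_norm_sq, h]
  have T3 : x 0 * x 0 + x 1 * x 1 = r ^ 2 := by
    have h : ⟪x, x⟫ = x 0 * x 0 + x 1 * x 1 := by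
      simp only [PiLp.inner_apply, Fin.sum_univ_two, RCLike.inner_apply, conj_trivial]
    rw [hr, ← real_inner_self_eq_norm_sq, h]
  have T2 : x 0 * y 0 + x 1 * y 1 = s * u := by
    have h : ⟪x, y⟫ = x 0 * y 0 + x 1 * y 1 := by
      simp only [PiLp.inner_apply, Fin.sum_univ_two, RCLike.inner_apply, conj_trivial]
      ring
    rw [hs, div_mul_cancel₀ _ hune, h]
  -- strict Cauchy-Schwarz
  have hD : 0 < r ^ 2 - s ^ 2 := by
    have hyn : ‖y‖ ≠ 0 := by rw [← hu]; exact hune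
    have hli := linearIndependent_fin2.mp hxy
    have hne : ∀ c : ℝ, c • y ≠ x := by simpa using hli.2
    have key : ∀ c : ℝ, ‖y‖ • x ≠ c • y := by
      intro c hc
      refine hne (c / ‖y‖) ?_
      have := congrArg (fun v => (‖y‖)⁻¹ • v) hc
      simpa [smul_smul, inv_mul_cancel₀ hyn, div_eq_inv_mul, mul_comm] using this.symm
    have h1' : ⟪x, y⟫ < ‖x‖ * ‖y‖ := inner_lt_norm_mul_iff_real.mpr (key ‖x‖)
    have h2' : ⟪x, -y⟫ < ‖x‖ * ‖-y‖ := inner_lt_norm_mul_iff_real.mpr (by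
      intro hc
      rw [norm_neg, smul_neg] at hc
      exact key (-‖x‖) (by rw [← neg_smul] at hc; rw [hc]))
    rw [inner_neg_right, norm_neg] at h2'
    have hr0 : 0 ≤ r := hr ▸ norm_nonneg x
    rw [← hu, ← hr] at h1' h2'
    have hlt : s ^ 2 < r ^ 2 := by
      rw [hs, div_pow, div_lt_iff₀ (by positivity)]
      nlinarith [abs_nonneg ⟪x, y⟫, sq_abs ⟪x, y⟫,
        abs_lt.mpr (⟨by linarith, by linarith⟩ : -(r*u) < ⟪x, y⟫ ∧ ⟪x, y⟫ < r * u)]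
    linarith
  have hDne : r ^ 2 - s ^ 2 ≠ 0 := hD.ne'
  have ha2' : (r ^ 2 - s ^ 2) * a ^ 2 = φ * Λ := by
    rw [ha, Real.sq_sqrt (by positivity), mul_div_cancel₀ _ hDne]
  -- cleared forms
  have hnv' : ∀ i, u * nv i = u * x i - s * y i := by
    intro i; rw [hnv]; field_simp
  have hL' : ∀ i, u * ℓlow i = φ * y i + φs * (u * nv i) := by
    intro i; rw [hℓlow]; field_simp
  have hm' : ∀ i, u * mlow i = a * (u * nv i) := by
    intro i; rw [hmlow]; ring
  have hginv' : ∀ j k, u ^ 2 * ginv j k = ρ0 * u ^ 2 * (if j = k then 1 else 0) +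
      ρ1 * (y j * y k) + ρ2 * u * (x j * y k + x k * y j) + ρ3 * u ^ 2 * (x j * x k) := by
    intro j k; rw [hginv]; rcases eq_or_ne j k with h|h
    · rw [if_pos h]; field_simp
    · rw [if_neg h]; field_simp
  have hgc : ∀ j k, u ^ 2 * g j k = σ0 * u ^ 2 * (if j = k then 1 else 0) +
      σ1 * (u * x j) * (u * x k) + σ2 * u * (x j * y k + x k * y j) + σ3 * (y j * y k) := by
    intro j k; rw [hg]; rcases eq_or_ne j k with h|h
    · rw [if_pos h]; field_simp
    · rw [if_neg h]; field_simp
  -- scalar identities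
  have K1 : φ * (ρ2 + ρ3 * s) + φs * (ρ0 + ρ3 * (r ^ 2 - s ^ 2)) = 0 := by
    rw [hρ0, hρ2, hρ3]; field_simp; rw [hΛdef]; ring
  have K2 : φ * (φ * (ρ0 + ρ1 + ρ2 * s) + φs * (ρ2 * (r ^ 2 - s ^ 2) - s * ρ0)) = 1 := by
    rw [hρ0, hρ1, hρ2]; field_simp; rw [hΛdef]; ring
  have K4 : φ * Λ * (ρ0 + ρ3 * (r ^ 2 - s ^ 2)) = 1 := by
    rw [hρ0, hρ3]; field_simp; rw [hΛdef]; ring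
  -- sum lemmas
  have N4 : (u*nv 0)*y 0 + (u*nv 1)*y 1 = 0 := by
    linear_combination y 0 * hnv' 0 + y 1 * hnv' 1 + u * T2 - s * T1
  have N5 : (u*nv 0)*x 0 + (u*nv 1)*x 1 = u*(r^2 - s^2) := by
    linear_combination x 0 * hnv' 0 + x 1 * hnv' 1 + u * T3 - s * T2
  have Gy : ∀ i, u^2*(ginv i 0*y 0 + ginv i 1*y 1) = u^2*(ρ0+ρ1+ρ2*s)*y i + u^3*(ρ2+ρ3*s)*x i := by
    have E00 := hginv' 0 0; have E01 := hginv' 0 1; have E10 := hginv' 1 0; have E11 := hginv' 1 1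
    rw [if_pos rfl] at E00 E11
    rw [if_neg (by decide : ¬((0:Fin 2) = 1))] at E01
    rw [if_neg (by decide : ¬((1:Fin 2) = 0))] at E10
    intro i
    fin_cases i <;> simp only [Fin.zero_eta, Fin.mk_one, Fin.isValue]
    · linear_combination y 0 * E00 + y 1 * E01 + (ρ1*y 0 + ρ2*u*x 0)*T1 + (ρ2*u*y 0 + ρ3*u^2*x 0)*T2
    · linear_combination y 0 * E10 + y 1 * E11 + (ρ1*y 1 + ρ2*u*x 1)*T1 + (ρ2*u*y 1 + ρ3*u^2*x 1)*T2
  have Gx : ∀ i, u^2*(ginv i 0*x 0 + ginv i 1*x 1) = u^2*(ρ0 + ρ2*s + ρ3*r^2)*x i + u*(ρ1*s + ρ2*r^2)*y i := by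
    have E00 := hginv' 0 0; have E01 := hginv' 0 1; have E10 := hginv' 1 0; have E11 := hginv' 1 1
    rw [if_pos rfl] at E00 E11
    rw [if_neg (by decide : ¬((0:Fin 2) = 1))] at E01
    rw [if_neg (by decide : ¬((1:Fin 2) = 0))] at E10
    intro i
    fin_cases i <;> simp only [Fin.zero_eta, Fin.mk_one, Fin.isValue]
    · linear_combination x 0 * E00 + x 1 * E01 + (ρ1*y 0 + ρ2*u*x 0)*T2 + (ρ2*u*y 0 + ρ3*u^2*x 0)*T3
    · linear_combination x 0 * E10 + x 1 * E11 + (ρ1*y 1 + ρ2*u*x 1)*T2 + (ρ2*u*y 1 + ρ3*u^2*x 1)*T3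
  have Gn : ∀ i, u^2*(ginv i 0*(u*nv 0) + ginv i 1*(u*nv 1)) =
      u^3*(ρ0+ρ3*(r^2-s^2))*x i + u^2*(ρ2*(r^2-s^2) - s*ρ0)*y i := by
    intro i
    linear_combination (u^2*ginv i 0)*hnv' 0 + (u^2*ginv i 1)*hnv' 1 + u*Gx i - s*Gy i
  have Gm : ∀ i, u^3 * mup i = a*u^3*(ρ0+ρ3*(r^2-s^2))*x i + a*u^2*(ρ2*(r^2-s^2)-s*ρ0)*y i := by
    intro i
    rw [hmup i, Fin.sum_univ_two, hmlow 0, hmlow 1]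
    linear_combination a * Gn i
  -- part 1
  have part1 : ∀ i, ℓup i = y i / F := by
    intro i
    rw [hF, eq_div_iff (mul_ne_zero hune hφne)]
    apply mul_left_cancel₀ (pow_ne_zero 3 hune)
    rw [hℓup i, Fin.sum_univ_two]
    linear_combination (u^3*φ*ginv i 0)*hL' 0 + (u^3*φ*ginv i 1)*hL' 1 + (φ^2*u)*(Gy i) +
      (φ*φs*u)*(Gn i) + (u^4*φ*x i)*K1 + (u^3*y i)*K2
  -- part 2
  have Syl : y 0 * ℓlow 0 + y 1 * ℓlow 1 = u * φ := by
    apply mul_left_cancel₀ hune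
    linear_combination y 0 * hL' 0 + y 1 * hL' 1 + φ * T1 + φs * N4
  have part2 : ∑ i, ℓup i * ℓlow i = 1 := by
    rw [Fin.sum_univ_two, part1 0, part1 1, hF, div_mul_eq_mul_div, div_mul_eq_mul_div,
      ← add_div, div_eq_one_iff_eq (mul_ne_zero hune hφne)]
    linear_combination Syl
  -- part 3a
  have Synv : y 0 * nv 0 + y 1 * nv 1 = 0 := by
    apply mul_left_cancel₀ hune
    linear_combination y 0 * hnv' 0 + y 1 * hnv' 1 + u * T2 - s * T1
  have part3a : ∑ i, ℓup i * mlow i = 0 := by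
    rw [Fin.sum_univ_two, part1 0, part1 1, hmlow 0, hmlow 1, hF]
    field_simp
    linear_combination a * Synv
  -- part 3b
  have K3 : (ρ0+ρ3*(r^2-s^2))*(s*φ+φs*(r^2-s^2)) + φ*(ρ2*(r^2-s^2)-s*ρ0) = 0 := by
    linear_combination (r^2-s^2)*K1
  have part3b : ∑ i, mup i * ℓlow i = 0 := by
    apply mul_left_cancel₀ (pow_ne_zero 4 hune)
    rw [Fin.sum_univ_two]
    linear_combination (u*ℓlow 0)*(Gm 0) + (u*ℓlow 1)*(Gm 1) +
      (a*u^3*(ρ0+ρ3*(r^2-s^2))*x 0 + a*u^2*(ρ2*(r^2-s^2)-s*ρ0)*y 0)*hL' 0 +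
      (a*u^3*(ρ0+ρ3*(r^2-s^2))*x 1 + a*u^2*(ρ2*(r^2-s^2)-s*ρ0)*y 1)*hL' 1 +
      (a*u^3*(ρ0+ρ3*(r^2-s^2))*φ)*T2 + (a*u^3*(ρ0+ρ3*(r^2-s^2))*φs)*N5 +
      (a*u^2*(ρ2*(r^2-s^2)-s*ρ0)*φ)*T1 + (a*u^2*(ρ2*(r^2-s^2)-s*ρ0)*φs)*N4 + (a*u^4)*K3
  -- part 4
  have part4 : ∑ i, mup i * mlow i = 1 := by
    apply mul_left_cancel₀ (pow_ne_zero 4 hune)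
    rw [Fin.sum_univ_two]
    linear_combination (u*mlow 0)*(Gm 0) + (u*mlow 1)*(Gm 1) +
      (a*u^3*(ρ0+ρ3*(r^2-s^2))*x 0 + a*u^2*(ρ2*(r^2-s^2)-s*ρ0)*y 0)*hm' 0 +
      (a*u^3*(ρ0+ρ3*(r^2-s^2))*x 1 + a*u^2*(ρ2*(r^2-s^2)-s*ρ0)*y 1)*hm' 1 +
      (a^2*u^3*(ρ0+ρ3*(r^2-s^2)))*N5 + (a^2*u^2*(ρ2*(r^2-s^2)-s*ρ0))*N4 +
      (u^4*(ρ0+ρ3*(r^2-s^2)))*ha2' + (u^4)*K4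
  -- part 5
  have hL2 : ∀ i, u * ℓlow i = φ * y i + φs * (u * x i - s * y i) := by
    intro i; linear_combination hL' i + φs * hnv' i
  have hm2 : ∀ i, u * mlow i = a * (u * x i - s * y i) := by
    intro i; linear_combination hm' i + a * hnv' i
  have HP : ∀ j k, (r^2-s^2)*(y j*y k) + (u*x j - s*y j)*(u*x k - s*y k) =
      u^2*(r^2-s^2)*(if j = k then 1 else 0) := by
    intro j k
    fin_cases j <;> fin_cases k <;> simp only [Fin.zero_eta, Fin.mk_one, Fin.isValue] <;>
      norm_num
    · linear_combination (u^2 - y 0^2)*T3 + (x 1*x 1)*T1 + (x 0*y 0 - x 1*y 1 - s*u)*T2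
    · linear_combination (-(y 0*y 1))*T3 + (x 0*y 1 + x 1*y 0)*T2 + (-(x 0*x 1))*T1
    · linear_combination (-(y 0*y 1))*T3 + (x 0*y 1 + x 1*y 0)*T2 + (-(x 0*x 1))*T1
    · linear_combination (u^2 - y 1^2)*T3 + (x 0*x 0)*T1 + (x 1*y 1 - x 0*y 0 - s*u)*T2
  have ha2'' : (r ^ 2 - s ^ 2) * a ^ 2 = φ * (φ - s * φs + (r ^ 2 - s ^ 2) * φss) := by
    rw [ha2', hΛdef]
  have part5 : ∀ j k, g j k = ℓlow j * ℓlow k + mlow j * mlow k := by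
    intro j k
    apply mul_left_cancel₀ (mul_ne_zero (pow_ne_zero 2 hune) hDne)
    have Hg := hgc j k
    linear_combination (r^2-s^2)*Hg +
      (u^2*(if j = k then (1:ℝ) else 0)*(r^2-s^2))*hσ0 +
      ((u*x j)*(u*x k)*(r^2-s^2))*hσ1 +
      (u*(x j*y k + x k*y j)*(r^2-s^2))*hσ2 +
      ((y j*y k)*(r^2-s^2))*hσ3 +
      (-(r^2-s^2)*(u*ℓlow k))*hL2 j +
      (-(r^2-s^2)*(φ*y j + φs*(u*x j - s*y j)))*hL2 k +
      (-(r^2-s^2)*(u*mlow k))*hm2 j +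
      (-(r^2-s^2)*(a*(u*x j - s*y j)))*hm2 k +
      (-((u*x j - s*y j)*(u*x k - s*y k)))*ha2'' +
      (-(φ*(φ - s*φs)))*HP j k
  exact ⟨part1, part2, ⟨part3a, part3b⟩, part4, part5⟩
end

section
/- Fix x ∈ ℝⁿ and a smooth function φ of (r,s) on an open set. For y ≠ 0, define g_{ij}(y) by the spherically symmetric formula with φ, φ_s, φ_ss evaluated at (r, s(x,y)), s(x,y) = ⟨x,y⟩/|y|. Then g_{ij} is differentiable in y and (1/2)∂g_{ij}/∂y^k = C_{ijk}, where C_{ijk} = (μ/(2u))(x_iδ_{jk} + x_jδ_{ik} + x_kδ_{ij}) + (ν/(2u)) x_ix_jx_k − (sμ/(2u²))(y_iδ_{jk} + y_jδ_{ik} + y_kδ_{ij}) + ((3sμ − s³ν)/(2u⁴)) y_iy_jy_k + ((s²ν − μ)/(2u³))(y_iy_jx_k + y_jy_kx_i + y_iy_kx_j) − (sν/(2u²))(x_ix_jy_k + x_ix_ky_j + x_kx_jy_i), with μ = φφ_s − sφ_s² − sφφ_ss and ν = 3φ_sφ_ss + φφ_sss evaluated at (r, s(x,y)). -/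
open RealInnerProductSpace

set_option maxHeartbeats 2000000 in
/-- For fixed x and a smooth profile φ(r,s) on an open set, the
spherically symmetric metric tensor g_{ij}(y) is differentiable in y with
(1/2)∂g_{ij}/∂y^k = C_{ijk}, the Cartan tensor, given by the explicit formula
with μ = φφ_s − sφ_s² − sφφ_ss and ν = 3φ_sφ_ss + φφ_sss evaluated at (r, s(x,y)). -/
theorem stmt_13 (n : ℕ) (Ω : Set (ℝ × ℝ)) (hΩ : IsOpen Ω)
    (φ : ℝ × ℝ → ℝ) (hφ : ContDiffOn ℝ (⊤ : ℕ∞) φ Ω)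
    (x y : EuclideanSpace ℝ (Fin n)) (hy : y ≠ 0)
    (r : ℝ) (hr : r = ‖x‖)
    (sf : EuclideanSpace ℝ (Fin n) → ℝ) (hsf : ∀ z, sf z = ⟪x, z⟫ / ‖z‖)
    (hrs : (r, sf y) ∈ Ω)
    (φs φss φsss : ℝ → ℝ)
    (hφs : φs = deriv fun t => φ (r, t)) (hφss : φss = deriv φs)
    (hφsss : φsss = deriv φss)
    (g : Fin n → Fin n → EuclideanSpace ℝ (Fin n) → ℝ)
    (hg : ∀ i j z, g i j z =
      φ (r, sf z) * (φ (r, sf z) - sf z * φs (sf z)) * (if i = j then 1 else 0) +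
      (φs (sf z) ^ 2 + φ (r, sf z) * φss (sf z)) * x i * x j +
      ((φ (r, sf z) - sf z * φs (sf z)) * φs (sf z) - sf z * φ (r, sf z) * φss (sf z)) /
        ‖z‖ * (x i * z j + x j * z i) +
      ((sf z) ^ 2 * φ (r, sf z) * φss (sf z) -
        sf z * (φ (r, sf z) - sf z * φs (sf z)) * φs (sf z)) / ‖z‖ ^ 2 * (z i * z j))
    (u s μ ν : ℝ) (hu : u = ‖y‖) (hsval : s = sf y)
    (hμ : μ = φ (r, s) * φs s - s * φs s ^ 2 - s * φ (r, s) * φss s)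
    (hν : ν = 3 * φs s * φss s + φ (r, s) * φsss s) :
    ∀ i j k, DifferentiableAt ℝ (g i j) y ∧
      1 / 2 * fderiv ℝ (g i j) y (EuclideanSpace.single k 1) =
        μ / (2 * u) * (x i * (if j = k then 1 else 0) + x j * (if i = k then 1 else 0) +
          x k * (if i = j then 1 else 0)) +
        ν / (2 * u) * (x i * x j * x k) -
        s * μ / (2 * u ^ 2) * (y i * (if j = k then 1 else 0) +
          y j * (if i = k then 1 else 0) + y k * (if i = j then 1 else 0)) +
        (3 * s * μ - s ^ 3 * ν) / (2 * u ^ 4) * (y i * y j * y k) +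
        (s ^ 2 * ν - μ) / (2 * u ^ 3) * (y i * y j * x k + y j * y k * x i + y i * y k * x j) -
        s * ν / (2 * u ^ 2) * (x i * x j * y k + x i * x k * y j + x k * x j * y i) := by
  intro i j k
  have hy0 : ‖y‖ ≠ 0 := norm_ne_zero_iff.mpr hy
  have hyy : ⟪y, y⟫ ≠ 0 := by
    rw [real_inner_self_eq_norm_mul_norm]; positivity
  have hSy : ⟪x, y⟫ * ‖y‖⁻¹ = sf y := by rw [hsf]; ring
  have hxy : ⟪x, y⟫ = s * ‖y‖ := by
    rw [hsval, hsf]; field_simp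
  -- slice smoothness
  have hU : IsOpen {t : ℝ | (r, t) ∈ Ω} :=
    IsOpen.preimage (continuous_const.prodMk continuous_id) hΩ
  have hsU : sf y ∈ {t : ℝ | (r, t) ∈ Ω} := hrs
  have hmem : {t : ℝ | (r, t) ∈ Ω} ∈ nhds (sf y) := hU.mem_nhds hsU
  have hψ : ContDiffOn ℝ (⊤ : ℕ∞) (fun t => φ (r, t)) {t : ℝ | (r, t) ∈ Ω} :=
    hφ.comp ((contDiff_const.prodMk contDiff_id).contDiffOn) (fun t ht => ht)
  have hψ1 : ContDiffOn ℝ (⊤ : ℕ∞) (deriv fun t => φ (r, t)) {t : ℝ | (r, t) ∈ Ω} :=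
    hψ.deriv_of_isOpen hU (by simp)
  have hψ2 : ContDiffOn ℝ (⊤ : ℕ∞) (deriv (deriv fun t => φ (r, t))) {t : ℝ | (r, t) ∈ Ω} :=
    hψ1.deriv_of_isOpen hU (by simp)
  have hd0 : DifferentiableAt ℝ (fun t => φ (r, t)) (sf y) :=
    (hψ.differentiableOn (by simp)).differentiableAt hmem
  have hd1 : DifferentiableAt ℝ (deriv fun t => φ (r, t)) (sf y) :=
    (hψ1.differentiableOn (by simp)).differentiableAt hmem
  have hd2 : DifferentiableAt ℝ (deriv (deriv fun t => φ (r, t))) (sf y) :=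
    (hψ2.differentiableOn (by simp)).differentiableAt hmem
  have hP : HasDerivAt (fun t => φ (r, t)) (φs (sf y)) (sf y) := by
    rw [hφs]; exact hd0.hasDerivAt
  have hPs : HasDerivAt φs (φss (sf y)) (sf y) := by
    rw [hφss, hφs]; exact hd1.hasDerivAt
  have hPss : HasDerivAt φss (φsss (sf y)) (sf y) := by
    rw [hφsss, hφss, hφs]; exact hd2.hasDerivAt
  -- derivative of the norm
  have hNorm : HasFDerivAt (fun z : EuclideanSpace ℝ (Fin n) => ‖z‖)
      ((1 / (2 * Real.sqrt ⟪y, y⟫)) •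
        ((fderivInnerCLM ℝ (y, y)).comp
          ((ContinuousLinearMap.id ℝ (EuclideanSpace ℝ (Fin n))).prod
            (ContinuousLinearMap.id ℝ (EuclideanSpace ℝ (Fin n)))))) y := by
    have h0 := ((hasFDerivAt_id y).inner ℝ (hasFDerivAt_id y)).sqrt hyy
    have heq : (fun z : EuclideanSpace ℝ (Fin n) => ‖z‖)
        = fun z : EuclideanSpace ℝ (Fin n) => Real.sqrt ⟪z, z⟫ := funext fun z => by
      rw [real_inner_self_eq_norm_mul_norm, Real.sqrt_mul_self (norm_nonneg z)]
    rw [heq]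
    exact h0
  have hNinv := (hasDerivAt_inv hy0).comp_hasFDerivAt y hNorm
  have hI : HasFDerivAt (fun z : EuclideanSpace ℝ (Fin n) => ⟪x, z⟫)
      ((fderivInnerCLM ℝ (x, y)).comp
        ((0 : EuclideanSpace ℝ (Fin n) →L[ℝ] EuclideanSpace ℝ (Fin n)).prod
          (ContinuousLinearMap.id ℝ (EuclideanSpace ℝ (Fin n))))) y :=
    (hasFDerivAt_const x y).inner ℝ (hasFDerivAt_id y)
  have hsv := hI.mul hNinv
  have hA := hP.comp_hasFDerivAt_of_eq y hsv hSy.symm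
  have hB := hPs.comp_hasFDerivAt_of_eq y hsv hSy.symm
  have hC := hPss.comp_hasFDerivAt_of_eq y hsv hSy.symm
  have hπi : HasFDerivAt (fun z : EuclideanSpace ℝ (Fin n) => z i)
      (EuclideanSpace.proj (𝕜 := ℝ) i) y := (EuclideanSpace.proj (𝕜 := ℝ) i).hasFDerivAt
  have hπj : HasFDerivAt (fun z : EuclideanSpace ℝ (Fin n) => z j)
      (EuclideanSpace.proj (𝕜 := ℝ) j) y := (EuclideanSpace.proj (𝕜 := ℝ) j).hasFDerivAt
  have ht1 := (hA.mul (hA.sub (hsv.mul hB))).mul_const (if i = j then (1 : ℝ) else 0)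
  have ht2 := ((hB.mul hB).add (hA.mul hC)).mul_const (x i * x j)
  have hlin := (hπj.const_mul (x i)).add (hπi.const_mul (x j))
  have ht3 := ((((hA.sub (hsv.mul hB)).mul hB).sub ((hsv.mul hA).mul hC)).mul hNinv).mul hlin
  have ht4 := (((((hsv.mul hsv).mul hA).mul hC).sub
      ((hsv.mul (hA.sub (hsv.mul hB))).mul hB)).mul (hNinv.mul hNinv)).mul (hπi.mul hπj)
  have hF := ((ht1.add ht2).add ht3).add ht4
  have hG := hF.congr_of_eventuallyEq (Filter.Eventually.of_forall fun z => show
      g i j z =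
        φ (r, ⟪x, z⟫ * ‖z‖⁻¹) *
            (φ (r, ⟪x, z⟫ * ‖z‖⁻¹) - ⟪x, z⟫ * ‖z‖⁻¹ * φs (⟪x, z⟫ * ‖z‖⁻¹)) *
            (if i = j then (1 : ℝ) else 0) +
          (φs (⟪x, z⟫ * ‖z‖⁻¹) * φs (⟪x, z⟫ * ‖z‖⁻¹) +
            φ (r, ⟪x, z⟫ * ‖z‖⁻¹) * φss (⟪x, z⟫ * ‖z‖⁻¹)) * (x i * x j) +
          ((φ (r, ⟪x, z⟫ * ‖z‖⁻¹) - ⟪x, z⟫ * ‖z‖⁻¹ * φs (⟪x, z⟫ * ‖z‖⁻¹)) *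
              φs (⟪x, z⟫ * ‖z‖⁻¹) -
            ⟪x, z⟫ * ‖z‖⁻¹ * φ (r, ⟪x, z⟫ * ‖z‖⁻¹) * φss (⟪x, z⟫ * ‖z‖⁻¹)) * ‖z‖⁻¹ *
            (x i * z j + x j * z i) +
          (⟪x, z⟫ * ‖z‖⁻¹ * (⟪x, z⟫ * ‖z‖⁻¹) * φ (r, ⟪x, z⟫ * ‖z‖⁻¹) *
              φss (⟪x, z⟫ * ‖z‖⁻¹) -
            ⟪x, z⟫ * ‖z‖⁻¹ *
              (φ (r, ⟪x, z⟫ * ‖z‖⁻¹) - ⟪x, z⟫ * ‖z‖⁻¹ * φs (⟪x, z⟫ * ‖z‖⁻¹)) *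
              φs (⟪x, z⟫ * ‖z‖⁻¹)) * (‖z‖⁻¹ * ‖z‖⁻¹) * (z i * z j)
      from by rw [hg]; simp only [hsf, div_eq_mul_inv]; ring)
  refine ⟨hG.differentiableAt, ?_⟩
  rw [hG.fderiv]
  simp only [ContinuousLinearMap.add_apply, ContinuousLinearMap.smul_apply,
    ContinuousLinearMap.sub_apply, ContinuousLinearMap.comp_apply,
    ContinuousLinearMap.prod_apply, ContinuousLinearMap.zero_apply,
    ContinuousLinearMap.id_apply, fderivInnerCLM_apply, smul_eq_mul,
    Function.comp_apply, PiLp.proj_apply, EuclideanSpace.single_apply,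
    EuclideanSpace.inner_single_right, EuclideanSpace.inner_single_left,
    inner_zero_left, conj_trivial, mul_one, one_mul, Pi.mul_apply, Pi.add_apply,
    Pi.sub_apply]
  rw [show Real.sqrt ⟪y, y⟫ = ‖y‖ by
    rw [real_inner_self_eq_norm_mul_norm, Real.sqrt_mul_self (norm_nonneg y)]]
  rw [hSy, ← hsval, hxy]
  subst hμ hν hu
  set d1 : ℝ := (if i = j then (1:ℝ) else 0) with hd1
  set d2 : ℝ := (if i = k then (1:ℝ) else 0) with hd2
  set d3 : ℝ := (if j = k then (1:ℝ) else 0) with hd3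
  field_simp
  ring
end

section
/- Let x, y ∈ ℝ² be linearly independent, and let φ, φ_s, φ_ss, φ_sss be real numbers with φ > 0, φ − sφ_s ≠ 0 and Λ := φ − sφ_s + (r²−s²)φ_ss > 0. Define the Cartan components C_{ijk} by the explicit spherically symmetric formula (with μ = φφ_s − sφ_s² − sφφ_ss, ν = 3φ_sφ_ss + φφ_sss), a = √(φΛ/(r²−s²)), m^i = a(ρ₀(x^i − (s/u)y^i) + ((r²−s²)/u)(ρ₂y^i + uρ₃x^i)), and I = uφ Σ_{i,j,k} m^i m^j m^k C_{ijk}. Then I = (φ/2)( (3μ/a)((m¹)² + (m²)²) − 3aμ(r²−s²)²B² + ν/a³ ), where B = ρ₂ + sρ₃. -/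
set_option maxHeartbeats 4000000


open RealInnerProductSpace

/-- For x, y ∈ ℝ² linearly independent, with the explicit Cartan
components C_{ijk}, a = √(φΛ/(r²−s²)), m^i as given, and
I = uφ Σ m^i m^j m^k C_{ijk}, the main scalar satisfies
I = (φ/2)((3μ/a)((m¹)² + (m²)²) − 3aμ(r²−s²)²B² + ν/a³), where B = ρ₂ + sρ₃. -/
theorem stmt_14 (x y : EuclideanSpace ℝ (Fin 2))
    (hxy : LinearIndependent ℝ ![x, y]) (hy : y ≠ 0)
    (u r s φ φs φss φsss Λ μ ν a B : ℝ)
    (hu : u = ‖y‖) (hr : r = ‖x‖) (hs : s = ⟪x, y⟫ / u)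
    (hφ : 0 < φ) (h1 : φ - s * φs ≠ 0)
    (hΛdef : Λ = φ - s * φs + (r ^ 2 - s ^ 2) * φss) (hΛ : 0 < Λ)
    (hμ : μ = φ * φs - s * φs ^ 2 - s * φ * φss)
    (hν : ν = 3 * φs * φss + φ * φsss)
    (ha : a = Real.sqrt (φ * Λ / (r ^ 2 - s ^ 2)))
    (ρ0 ρ2 ρ3 : ℝ)
    (hρ0 : ρ0 = 1 / (φ * (φ - s * φs)))
    (hρ2 : ρ2 = -(φ * φs - s * φs ^ 2 - s * φ * φss) / (φ ^ 2 * (φ - s * φs) * Λ))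
    (hρ3 : ρ3 = -φss / (φ * (φ - s * φs) * Λ))
    (hB : B = ρ2 + s * ρ3)
    (C : Fin 2 → Fin 2 → Fin 2 → ℝ)
    (hC : ∀ i j k, C i j k =
      μ / (2 * u) * (x i * (if j = k then 1 else 0) + x j * (if i = k then 1 else 0) +
        x k * (if i = j then 1 else 0)) +
      ν / (2 * u) * (x i * x j * x k) -
      s * μ / (2 * u ^ 2) * (y i * (if j = k then 1 else 0) +
        y j * (if i = k then 1 else 0) + y k * (if i = j then 1 else 0)) +
      (3 * s * μ - s ^ 3 * ν) / (2 * u ^ 4) * (y i * y j * y k) +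
      (s ^ 2 * ν - μ) / (2 * u ^ 3) * (y i * y j * x k + y j * y k * x i + y i * y k * x j) -
      s * ν / (2 * u ^ 2) * (x i * x j * y k + x i * x k * y j + x k * x j * y i))
    (m : Fin 2 → ℝ)
    (hm : ∀ i, m i = a * (ρ0 * (x i - s / u * y i) +
      (r ^ 2 - s ^ 2) / u * (ρ2 * y i + u * ρ3 * x i)))
    (I : ℝ) (hI : I = u * φ * ∑ i, ∑ j, ∑ k, m i * m j * m k * C i j k) :
    I = φ / 2 * (3 * μ / a * ((m 0) ^ 2 + (m 1) ^ 2) -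
      3 * a * μ * (r ^ 2 - s ^ 2) ^ 2 * B ^ 2 + ν / a ^ 3) := by
  have hu0 : 0 < u := hu ▸ norm_pos_iff.mpr hy
  have hun : u ≠ 0 := hu0.ne'
  -- basic coordinate identities
  have hin : ⟪x, y⟫ = x 0 * y 0 + x 1 * y 1 := by
    simp [PiLp.inner_apply, RCLike.inner_apply, Fin.sum_univ_two, mul_comm]
  have hsu : x 0 * y 0 + x 1 * y 1 = s * u := by rw [← hin, hs]; field_simp
  have hu2 : y 0 ^ 2 + y 1 ^ 2 = u ^ 2 := by
    have : ⟪y, y⟫ = y 0 ^ 2 + y 1 ^ 2 := by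
      simp only [PiLp.inner_apply, RCLike.inner_apply, Fin.sum_univ_two, conj_trivial]; ring
    rw [← this, real_inner_self_eq_norm_sq, hu]
  have hr2 : x 0 ^ 2 + x 1 ^ 2 = r ^ 2 := by
    have : ⟪x, x⟫ = x 0 ^ 2 + x 1 ^ 2 := by
      simp only [PiLp.inner_apply, RCLike.inner_apply, Fin.sum_univ_two, conj_trivial]; ring
    rw [← this, real_inner_self_eq_norm_sq, hr]
  -- strict Cauchy-Schwarz
  have hrs : 0 < r ^ 2 - s ^ 2 := by
    have h2 := LinearIndependent.pair_iff.mp hxy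
    have hA : ⟪x, y⟫ < ‖x‖ * ‖y‖ := by
      refine inner_lt_norm_mul_iff_real.mpr (fun h => ?_)
      have := (h2 ‖y‖ (-‖x‖) (by rw [neg_smul, ← h]; abel)).1
      exact (hu ▸ hu0).ne' this
    have hB' : -⟪x, y⟫ < ‖x‖ * ‖y‖ := by
      have h3 : ⟪x, -y⟫ < ‖x‖ * ‖-y‖ := by
        refine inner_lt_norm_mul_iff_real.mpr (fun h => ?_)
        have := (h2 ‖-y‖ ‖x‖ (by rw [h]; simp)).1
        simp only [norm_neg] at this
        exact (hu ▸ hu0).ne' this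
      simpa [inner_neg_right] using h3
    have hsq : ⟪x, y⟫ ^ 2 < ‖x‖ ^ 2 * ‖y‖ ^ 2 := by
      calc ⟪x, y⟫ ^ 2 < (‖x‖ * ‖y‖) ^ 2 := sq_lt_sq' (by linarith) hA
        _ = ‖x‖ ^ 2 * ‖y‖ ^ 2 := by ring
    have hseq : s * u = ⟪x, y⟫ := by rw [hs]; field_simp
    have hru : r ^ 2 * u ^ 2 = ‖x‖ ^ 2 * ‖y‖ ^ 2 := by rw [hr, hu]
    nlinarith [sq_nonneg u, hu0]
  -- properties of a
  have haa : 0 < φ * Λ / (r ^ 2 - s ^ 2) := by positivity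
  have ha0 : a ≠ 0 := by rw [ha]; exact (Real.sqrt_pos.mpr haa).ne'
  have ha2 : a ^ 2 * (r ^ 2 - s ^ 2) = φ * Λ := by
    rw [ha, Real.sq_sqrt haa.le]; field_simp
  have huu : u * u⁻¹ = 1 := mul_inv_cancel₀ hun
  -- the contractions p and q
  have hq : m 0 * y 0 + m 1 * y 1 = a * (r ^ 2 - s ^ 2) * u * B := by
    have e : m 0 * y 0 + m 1 * y 1 =
        (a * ρ0 + a * (r ^ 2 - s ^ 2) * (u * ρ3) / u) * (x 0 * y 0 + x 1 * y 1) +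
        (-(a * ρ0 * s / u) + a * (r ^ 2 - s ^ 2) * ρ2 / u) * (y 0 ^ 2 + y 1 ^ 2) := by
      rw [hm 0, hm 1]; ring
    rw [e, hsu, hu2, hB]
    linear_combination (a * (r ^ 2 - s ^ 2) * s * u * ρ3 - a * ρ0 * s * u +
      a * (r ^ 2 - s ^ 2) * ρ2 * u) * huu
  have hp : m 0 * x 0 + m 1 * x 1 = a * (r ^ 2 - s ^ 2) * (ρ0 + s * ρ2 + r ^ 2 * ρ3) := by
    have e : m 0 * x 0 + m 1 * x 1 =
        (a * ρ0 + a * (r ^ 2 - s ^ 2) * (u * ρ3) / u) * (x 0 ^ 2 + x 1 ^ 2) +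
        (-(a * ρ0 * s / u) + a * (r ^ 2 - s ^ 2) * ρ2 / u) * (x 0 * y 0 + x 1 * y 1) := by
      rw [hm 0, hm 1]; ring
    rw [e, hr2, hsu]
    linear_combination (a * (r ^ 2 - s ^ 2) * r ^ 2 * ρ3 +
      s * (-(a * ρ0 * s) + a * (r ^ 2 - s ^ 2) * ρ2)) * huu
  have key : φ * Λ * (ρ0 + (r ^ 2 - s ^ 2) * ρ3) = 1 := by
    rw [hρ0, hρ3]; field_simp
    linear_combination hΛdef
  have ht : a * (m 0 * x 0 + m 1 * x 1 - s * (m 0 * y 0 + m 1 * y 1) / u) = 1 := by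
    rw [hp, hq]
    have hqq : s * (a * (r ^ 2 - s ^ 2) * u * B) / u = s * (a * (r ^ 2 - s ^ 2) * B) := by
      field_simp
    rw [hqq, hB]
    linear_combination (ρ0 + (r ^ 2 - s ^ 2) * ρ3) * ha2 + key
  have hT : m 0 * x 0 + m 1 * x 1 - s * (m 0 * y 0 + m 1 * y 1) / u = 1 / a :=
    (eq_div_iff ha0).mpr (by linear_combination ht)
  have hqu : (m 0 * y 0 + m 1 * y 1) / u = a * (r ^ 2 - s ^ 2) * B := by
    rw [hq]; field_simp
  -- main sum identity (pure algebra)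
  have hI' : I = φ / 2 * (3 * μ * (m 0 * x 0 + m 1 * x 1 - s * (m 0 * y 0 + m 1 * y 1) / u) *
        ((m 0 ^ 2 + m 1 ^ 2) - ((m 0 * y 0 + m 1 * y 1) / u) ^ 2) +
      ν * (m 0 * x 0 + m 1 * x 1 - s * (m 0 * y 0 + m 1 * y 1) / u) ^ 3) := by
    rw [hI]
    simp only [Fin.sum_univ_two, hC, reduceIte, one_ne_zero, zero_ne_one, if_false, if_true]
    field_simp
    ring
  have haa1 : a * a⁻¹ = 1 := mul_inv_cancel₀ ha0
  rw [hI', hT, hqu]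
  linear_combination (-(3 : ℝ) / 2 * φ * μ * (r ^ 2 - s ^ 2) ^ 2 * B ^ 2 * a) * haa1
end

section
/- Let I ⊆ ℝ be an open interval and let φ : I → ℝ be smooth and positive. Then φ(s)φ'(s) − sφ'(s)² − sφ(s)φ''(s) = 0 for all s ∈ I if and only if there exist constants c₁, c₂ ∈ ℝ such that φ(s)² = c₁s² + c₂ for all s ∈ I (i.e. φ(s) = √(c₁s² + c₂), and the corresponding spherically symmetric metric F = uφ is Riemannian). -/
open Filter Topology

/-- Auxiliary: a function with vanishing derivative on an open convex set is constant there. -/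
lemma aux_const_of_hasDerivAt_zero {s : Set ℝ} (ho : IsOpen s) (hs : Convex ℝ s)
    {f : ℝ → ℝ} (hf : ∀ x ∈ s, HasDerivAt f 0 x) :
    ∀ x ∈ s, ∀ y ∈ s, f x = f y := by
  intro x hx y hy
  refine hs.is_const_of_fderivWithin_eq_zero
    (fun z hz => ((hf z hz).differentiableAt).differentiableWithinAt)
    (fun z hz => ?_) hx hy
  rw [fderivWithin_of_isOpen ho hz, (hf z hz).hasFDerivAt.fderiv]
  ext
  simp

/-- For φ smooth and positive on an open interval I,
φφ' − sφ'² − sφφ'' = 0 on I if and only if there are constants c₁, c₂ with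
φ(s)² = c₁s² + c₂ on I (i.e. φ(s) = √(c₁s² + c₂)). -/
theorem stmt_16 (I : Set ℝ) (hI : IsOpen I) (hIconn : I.OrdConnected)
    (φ : ℝ → ℝ) (hφ : ContDiffOn ℝ (⊤ : ℕ∞) φ I) (hpos : ∀ s ∈ I, 0 < φ s) :
    (∀ s ∈ I, φ s * deriv φ s - s * (deriv φ s) ^ 2 - s * φ s * deriv (deriv φ) s = 0) ↔
      ∃ c₁ c₂ : ℝ, ∀ s ∈ I, (φ s) ^ 2 = c₁ * s ^ 2 + c₂ ∧
        φ s = Real.sqrt (c₁ * s ^ 2 + c₂) := by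
  have hconv : Convex ℝ I := convex_iff_ordConnected.mpr hIconn
  set φ1 := deriv φ with hφ1def
  set φ2 := deriv φ1 with hφ2def
  set φ3 := deriv φ2 with hφ3def
  have hφ1 : ContDiffOn ℝ (⊤ : ℕ∞) φ1 I := hφ.deriv_of_isOpen hI (by simp)
  have hφ2 : ContDiffOn ℝ (⊤ : ℕ∞) φ2 I := hφ1.deriv_of_isOpen hI (by simp)
  have hφ3 : ContDiffOn ℝ (⊤ : ℕ∞) φ3 I := hφ2.deriv_of_isOpen hI (by simp)
  have hd : ∀ s ∈ I, HasDerivAt φ (φ1 s) s := fun s hs =>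
    ((hφ.differentiableOn (by simp)).differentiableAt (hI.mem_nhds hs)).hasDerivAt
  have hd1 : ∀ s ∈ I, HasDerivAt φ1 (φ2 s) s := fun s hs =>
    ((hφ1.differentiableOn (by simp)).differentiableAt (hI.mem_nhds hs)).hasDerivAt
  have hd2 : ∀ s ∈ I, HasDerivAt φ2 (φ3 s) s := fun s hs =>
    ((hφ2.differentiableOn (by simp)).differentiableAt (hI.mem_nhds hs)).hasDerivAt
  constructor
  · intro h
    rcases I.eq_empty_or_nonempty with hIe | ⟨s₀, hs₀⟩
    · exact ⟨0, 0, by simp [hIe]⟩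
    -- Step 1: s * (3 φ1 φ2 + φ φ3) = 0 on I
    have hQkey : ∀ s ∈ I, s * (3 * (φ1 s * φ2 s) + φ s * φ3 s) = 0 := by
      intro s hs
      have hG : HasDerivAt (fun t => φ t * φ1 t - t * (φ1 t * φ1 t) - t * φ t * φ2 t)
          ((φ1 s * φ1 s + φ s * φ2 s) -
            (1 * (φ1 s * φ1 s) + s * (φ2 s * φ1 s + φ1 s * φ2 s)) -
            ((1 * φ s + s * φ1 s) * φ2 s + s * φ s * φ3 s)) s := by
        exact (((hd s hs).mul (hd1 s hs)).sub
          ((hasDerivAt_id s).mul ((hd1 s hs).mul (hd1 s hs)))).sub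
          (((hasDerivAt_id s).mul (hd s hs)).mul (hd2 s hs))
      have hzero : HasDerivAt (fun t => φ t * φ1 t - t * (φ1 t * φ1 t) - t * φ t * φ2 t) 0 s := by
        have hev : (fun t => φ t * φ1 t - t * (φ1 t * φ1 t) - t * φ t * φ2 t)
            =ᶠ[𝓝 s] (fun _ => (0 : ℝ)) := by
          filter_upwards [hI.mem_nhds hs] with t ht
          have := h t ht
          nlinarith [this]
        exact (hasDerivAt_const s (0 : ℝ)).congr_of_eventuallyEq hev
      have := hG.unique hzero
      nlinarith [this]
    -- Step 2: 3 φ1 φ2 + φ φ3 = 0 on I (continuity through 0)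
    have hQ : ∀ s ∈ I, 3 * (φ1 s * φ2 s) + φ s * φ3 s = 0 := by
      intro s hs
      by_cases hs0 : s = 0
      · subst hs0
        have hcont : ContinuousAt (fun t => 3 * (φ1 t * φ2 t) + φ t * φ3 t) 0 := by
          have : ContinuousOn (fun t => 3 * (φ1 t * φ2 t) + φ t * φ3 t) I := by
            exact (continuousOn_const.mul (hφ1.continuousOn.mul hφ2.continuousOn)).add
              (hφ.continuousOn.mul hφ3.continuousOn)
          exact this.continuousAt (hI.mem_nhds hs)
        have h1 : Tendsto (fun t => 3 * (φ1 t * φ2 t) + φ t * φ3 t) (𝓝[≠] (0:ℝ))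
            (𝓝 (3 * (φ1 0 * φ2 0) + φ 0 * φ3 0)) :=
          hcont.tendsto.mono_left nhdsWithin_le_nhds
        have h2 : Tendsto (fun t => 3 * (φ1 t * φ2 t) + φ t * φ3 t) (𝓝[≠] (0:ℝ)) (𝓝 0) := by
          refine tendsto_const_nhds.congr' ?_
          filter_upwards [self_mem_nhdsWithin,
            mem_nhdsWithin_of_mem_nhds (hI.mem_nhds hs)] with t ht htI
          have ht0 : t ≠ 0 := ht
          have := hQkey t htI
          field_simp at this ⊢
          rcases mul_eq_zero.mp this with h' | h'
          · exact absurd h' ht0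
          · linarith
        exact tendsto_nhds_unique h1 h2
      · have := hQkey s hs
        rcases mul_eq_zero.mp this with h' | h'
        · exact absurd h' hs0
        · exact h'
    -- Step 3: P := φ1² + φ φ2 is constant, value c₁
    set c₁ := φ1 s₀ * φ1 s₀ + φ s₀ * φ2 s₀ with hc₁def
    have hPconst : ∀ s ∈ I, φ1 s * φ1 s + φ s * φ2 s = c₁ := by
      intro s hs
      have hder : ∀ t ∈ I, HasDerivAt (fun u => φ1 u * φ1 u + φ u * φ2 u) 0 t := by
        intro t ht
        have hP : HasDerivAt (fun u => φ1 u * φ1 u + φ u * φ2 u)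
            ((φ2 t * φ1 t + φ1 t * φ2 t) + (φ1 t * φ2 t + φ t * φ3 t)) t :=
          ((hd1 t ht).mul (hd1 t ht)).add ((hd t ht).mul (hd2 t ht))
        have hq := hQ t ht
        have : (φ2 t * φ1 t + φ1 t * φ2 t) + (φ1 t * φ2 t + φ t * φ3 t) = 0 := by linarith
        rwa [this] at hP
      exact aux_const_of_hasDerivAt_zero hI hconv hder s hs s₀ hs₀
    -- Step 4: φ φ1 = c₁ s on I
    have hlin : ∀ s ∈ I, φ s * φ1 s = c₁ * s := by
      intro s hs
      have h1 := h s hs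
      have h2 := hPconst s hs
      linear_combination h1 + s * h2
    -- Step 5: φ² - c₁ s² is constant, value c₂
    set c₂ := φ s₀ * φ s₀ - c₁ * (s₀ * s₀) with hc₂def
    have hMconst : ∀ s ∈ I, φ s * φ s - c₁ * (s * s) = c₂ := by
      intro s hs
      have hder : ∀ t ∈ I, HasDerivAt (fun u => φ u * φ u - c₁ * (u * u)) 0 t := by
        intro t ht
        have hM : HasDerivAt (fun u => φ u * φ u - c₁ * (u * u))
            ((φ1 t * φ t + φ t * φ1 t) - c₁ * (1 * t + t * 1)) t :=
          ((hd t ht).mul (hd t ht)).sub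
            (((hasDerivAt_id t).mul (hasDerivAt_id t)).const_mul c₁)
        have := hlin t ht
        have hz : (φ1 t * φ t + φ t * φ1 t) - c₁ * (1 * t + t * 1) = 0 := by nlinarith
        rwa [hz] at hM
      exact aux_const_of_hasDerivAt_zero hI hconv hder s hs s₀ hs₀
    refine ⟨c₁, c₂, fun s hs => ?_⟩
    have hsq : (φ s) ^ 2 = c₁ * s ^ 2 + c₂ := by
      have := hMconst s hs
      ring_nf
      ring_nf at this
      linarith
    refine ⟨hsq, ?_⟩
    rw [← hsq, Real.sqrt_sq (hpos s hs).le]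
  · rintro ⟨c₁, c₂, hc⟩ s hs
    have hsq : ∀ t ∈ I, φ t * φ t = c₁ * t ^ 2 + c₂ := by
      intro t ht
      have := (hc t ht).1
      nlinarith [this]
    -- deriv of φ² at s equals 2 c₁ s, so φ φ1 = c₁ s; but we need it at every point of I
    have hlin : ∀ t ∈ I, φ t * φ1 t = c₁ * t := by
      intro t ht
      have h1 : HasDerivAt (fun u => φ u * φ u) (φ1 t * φ t + φ t * φ1 t) t :=
        (hd t ht).mul (hd t ht)
      have h2 : HasDerivAt (fun u => φ u * φ u) (c₁ * (2 * t)) t := by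
        have hg : HasDerivAt (fun u : ℝ => c₁ * u ^ 2 + c₂) (c₁ * (2 * t)) t := by
          simpa using ((hasDerivAt_pow 2 t).const_mul c₁).add_const c₂
        refine hg.congr_of_eventuallyEq ?_
        filter_upwards [hI.mem_nhds ht] with u hu
        exact hsq u hu
      have := h1.unique h2
      nlinarith [this]
    have hquad : φ1 s * φ1 s + φ s * φ2 s = c₁ := by
      have h1 : HasDerivAt (fun u => φ u * φ1 u) (φ1 s * φ1 s + φ s * φ2 s) s :=
        (hd s hs).mul (hd1 s hs)
      have h2 : HasDerivAt (fun u => φ u * φ1 u) (c₁ * 1) s := by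
        have hg : HasDerivAt (fun u : ℝ => c₁ * u) (c₁ * 1) s :=
          (hasDerivAt_id s).const_mul c₁
        refine hg.congr_of_eventuallyEq ?_
        filter_upwards [hI.mem_nhds hs] with u hu
        exact hlin u hu
      have := h1.unique h2
      linarith
    have := hlin s hs
    linear_combination this - s * hquad
end

section
/- Let b > 0 and let φ : (−b, b) → ℝ be smooth. Then φ(s) − sφ'(s) + (b² − s²)φ''(s) = 0 for all s ∈ (−b, b) if and only if there exist constants c₁, c₂ ∈ ℝ such that φ(s) = c₁ s + c₂ √(b² − s²) for all s ∈ (−b, b). -/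
open Set Filter Topology

private lemma const_of_hasDerivAt_zero {f : ℝ → ℝ} {a b : ℝ}
    (hf : ∀ z ∈ Ioo a b, HasDerivAt f 0 z) :
    ∀ x ∈ Ioo a b, ∀ y ∈ Ioo a b, f x = f y := by
  intro x hx y hy
  refine (convex_Ioo a b).is_const_of_fderivWithin_eq_zero
    (fun z hz => (hf z hz).differentiableAt.differentiableWithinAt) (fun z hz => ?_) hx hy
  rw [fderivWithin_of_isOpen isOpen_Ioo hz, (hf z hz).hasFDerivAt.fderiv]
  ext t
  simp

private lemma vanish_side {M D : ℝ → ℝ} {b : ℝ} (hb : 0 < b)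
    (hM : ∀ s ∈ Ioo (0:ℝ) b, HasDerivAt M (D s) s)
    (hD0 : Tendsto D (𝓝[Ioo (0:ℝ) b] 0) (𝓝 0))
    (key : ∀ s ∈ Ioo (0:ℝ) b, s * D s = M s) :
    ∀ s ∈ Ioo (0:ℝ) b, M s = 0 := by
  have hhalf : b / 2 ∈ Ioo (0:ℝ) b := ⟨by linarith, by linarith⟩
  set c : ℝ := M (b / 2) / (b / 2) with hc
  have hR : ∀ s ∈ Ioo (0:ℝ) b, M s / s = c := by
    intro s hs
    refine const_of_hasDerivAt_zero (f := fun s => M s / s) ?_ s hs _ hhalf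
    intro z hz
    have hz0 : z ≠ 0 := ne_of_gt hz.1
    have h := (hM z hz).div (hasDerivAt_id z) hz0
    have he : (D z * id z - M z * 1) / id z ^ 2 = 0 := by
      simp only [id_eq, mul_one]
      rw [mul_comm, key z hz, sub_self, zero_div]
    rw [he] at h
    exact h
  have hD : ∀ s ∈ Ioo (0:ℝ) b, D s = c := by
    intro s hs
    have hs0 : s ≠ 0 := ne_of_gt hs.1
    have := key s hs
    have h2 := hR s hs
    rw [div_eq_iff hs0] at h2
    rw [h2] at this
    exact mul_left_cancel₀ hs0 (by linarith)
  have hne : (𝓝[Ioo (0:ℝ) b] (0:ℝ)).NeBot := by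
    refine mem_closure_iff_nhdsWithin_neBot.1 ?_
    rw [closure_Ioo (ne_of_lt hb)]
    exact ⟨le_rfl, le_of_lt hb⟩
  have htc : Tendsto D (𝓝[Ioo (0:ℝ) b] 0) (𝓝 c) := by
    refine Tendsto.congr' ?_ tendsto_const_nhds
    filter_upwards [self_mem_nhdsWithin] with s hs
    exact (hD s hs).symm
  have hc0 : c = 0 := tendsto_nhds_unique htc hD0
  intro s hs
  have := key s hs
  rw [hD s hs, hc0, mul_zero] at this
  exact this.symm

/-- For b > 0 and φ smooth on (−b, b),
φ(s) − sφ'(s) + (b² − s²)φ''(s) = 0 on (−b,b) if and only if there are constants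
c₁, c₂ with φ(s) = c₁ s + c₂ √(b² − s²) on (−b, b). -/
theorem stmt_18 (b : ℝ) (hb : 0 < b) (φ : ℝ → ℝ)
    (hφ : ContDiffOn ℝ (⊤ : ℕ∞) φ (Set.Ioo (-b) b)) :
    (∀ s ∈ Set.Ioo (-b) b,
        φ s - s * deriv φ s + (b ^ 2 - s ^ 2) * deriv (deriv φ) s = 0) ↔
      ∃ c₁ c₂ : ℝ, ∀ s ∈ Set.Ioo (-b) b,
        φ s = c₁ * s + c₂ * Real.sqrt (b ^ 2 - s ^ 2) := by
  have hIopen : IsOpen (Ioo (-b) b) := isOpen_Ioo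
  have hpos : ∀ s ∈ Ioo (-b) b, 0 < b ^ 2 - s ^ 2 := by
    intro s hs
    nlinarith [hs.1, hs.2]
  have h0I : (0:ℝ) ∈ Ioo (-b) b := ⟨by linarith, hb⟩
  set w : ℝ → ℝ := fun s => Real.sqrt (b ^ 2 - s ^ 2) with hwdef
  have hw_pos : ∀ s ∈ Ioo (-b) b, 0 < w s := fun s hs => Real.sqrt_pos.2 (hpos s hs)
  have hw_sq : ∀ s ∈ Ioo (-b) b, w s ^ 2 = b ^ 2 - s ^ 2 :=
    fun s hs => Real.sq_sqrt (le_of_lt (hpos s hs))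
  have hw0 : w 0 = b := by
    simp only [hwdef]
    rw [show b ^ 2 - (0:ℝ) ^ 2 = b ^ 2 by ring, Real.sqrt_sq hb.le]
  have hw_deriv : ∀ s ∈ Ioo (-b) b, HasDerivAt w (-s / w s) s := by
    intro s hs
    have h1 : HasDerivAt (fun x : ℝ => b ^ 2 - x ^ 2) (0 - 2 * s ^ 1) s :=
      (hasDerivAt_const s (b ^ 2)).sub (hasDerivAt_pow 2 s)
    have h2 := (Real.hasDerivAt_sqrt (ne_of_gt (hpos s hs))).comp s h1
    refine h2.congr_deriv (Eq.symm ?_)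
    have := hw_pos s hs
    rw [hwdef] at this ⊢
    field_simp
    ring
  have hw_cont : Continuous w := by
    rw [hwdef]; fun_prop
  have hφ1 : ∀ s ∈ Ioo (-b) b, HasDerivAt φ (deriv φ s) s := by
    intro s hs
    exact ((hφ.differentiableOn (by simp) s hs).differentiableAt (hIopen.mem_nhds hs)).hasDerivAt
  have hφ' : ContDiffOn ℝ (⊤ : ℕ∞) (deriv φ) (Ioo (-b) b) := hφ.deriv_of_isOpen hIopen (by simp)
  have hφ2 : ∀ s ∈ Ioo (-b) b, HasDerivAt (deriv φ) (deriv (deriv φ) s) s := by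
    intro s hs
    exact ((hφ'.differentiableOn (by simp) s hs).differentiableAt (hIopen.mem_nhds hs)).hasDerivAt
  have hφ'cont : ContinuousOn (deriv φ) (Ioo (-b) b) :=
    hφ.continuousOn_deriv_of_isOpen hIopen (by simp)
  constructor
  · -- forward direction
    intro hode
    set c₂ : ℝ := φ 0 / b with hc₂
    set c₁ : ℝ := deriv φ 0 with hc₁
    refine ⟨c₁, c₂, ?_⟩
    -- Step A: (φ - s φ') w is constant
    have key1 : ∀ s ∈ Ioo (-b) b, (φ s - s * deriv φ s) * w s = φ 0 * b := by
      have hv : ∀ s ∈ Ioo (-b) b,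
          HasDerivAt (fun s => (φ s - s * deriv φ s) * w s) 0 s := by
        intro s hs
        have hu : HasDerivAt (fun s => φ s - s * deriv φ s)
            (deriv φ s - (1 * deriv φ s + s * deriv (deriv φ) s)) s :=
          (hφ1 s hs).sub ((hasDerivAt_id' (x := s)).mul (hφ2 s hs))
        have h := hu.mul (hw_deriv s hs)
        refine h.congr_deriv (Eq.symm ?_)
        have hwp := hw_pos s hs
        have hws := hw_sq s hs
        have e1 : φ s - s * deriv φ s = -((b ^ 2 - s ^ 2) * deriv (deriv φ) s) := by
          linarith [hode s hs]
        rw [e1, ← hws]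
        field_simp
        ring
      intro s hs
      have := const_of_hasDerivAt_zero hv s hs 0 h0I
      rw [this]
      rw [hw0]
      ring_nf
    -- Step B/C
    set M : ℝ → ℝ := fun s => φ s - c₂ * w s - c₁ * s with hMdef
    set D : ℝ → ℝ := fun s => deriv φ s + c₂ * (s / w s) - c₁ with hDdef
    have hMd : ∀ s ∈ Ioo (-b) b, HasDerivAt M (D s) s := by
      intro s hs
      have h := ((hφ1 s hs).sub ((hw_deriv s hs).const_mul c₂)).sub
        ((hasDerivAt_id s).const_mul c₁)
      refine h.congr_deriv (Eq.symm ?_)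
      simp only [hDdef]
      ring
    have hcb : c₂ * b ^ 2 = φ 0 * b := by
      rw [hc₂]; field_simp
    have key2 : ∀ s ∈ Ioo (-b) b, s * D s = M s := by
      intro s hs
      have h1 := key1 s hs
      have hws := hw_sq s hs
      have hwp := hw_pos s hs
      simp only [hDdef, hMdef]
      field_simp
      linear_combination -h1 + c₂ * hws + hcb
    have hM0 : M 0 = 0 := by
      simp only [hMdef, hw0, hc₂]
      field_simp
      ring
    have hD0 : D 0 = 0 := by
      simp only [hDdef, hc₁]
      simp
    have hDcont : ContinuousOn D (Ioo (-b) b) := by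
      refine ContinuousOn.sub (ContinuousOn.add hφ'cont ?_) continuousOn_const
      refine ContinuousOn.mul continuousOn_const ?_
      exact ContinuousOn.div continuousOn_id hw_cont.continuousOn
        (fun s hs => ne_of_gt (hw_pos s hs))
    have hDt : Tendsto D (𝓝[Ioo (-b) b] 0) (𝓝 0) := by
      have h := hDcont 0 h0I
      rw [ContinuousWithinAt, hD0] at h
      exact h
    have hpos_side : ∀ s ∈ Ioo (0:ℝ) b, M s = 0 := by
      have hsub : Ioo (0:ℝ) b ⊆ Ioo (-b) b := fun x hx => ⟨by linarith [hx.1], hx.2⟩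
      exact vanish_side hb (fun s hs => hMd s (hsub hs))
        (hDt.mono_left (nhdsWithin_mono 0 hsub)) (fun s hs => key2 s (hsub hs))
    have hneg_side : ∀ s ∈ Ioo (-b) (0:ℝ), M s = 0 := by
      have hsub : Ioo (-b) (0:ℝ) ⊆ Ioo (-b) b := fun x hx => ⟨hx.1, by linarith [hx.2]⟩
      have hmem : ∀ s ∈ Ioo (0:ℝ) b, -s ∈ Ioo (-b) (0:ℝ) := by
        intro s hs
        exact ⟨by linarith [hs.2], by linarith [hs.1]⟩
      have h := vanish_side (M := fun s => M (-s)) (D := fun s => -D (-s)) hb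
        (fun s hs => by
          have h1 := (hMd (-s) (hsub (hmem s hs))).comp s (hasDerivAt_neg s)
          refine h1.congr_deriv (Eq.symm ?_)
          ring)
        (by
          have hneg_map : Tendsto (fun s : ℝ => -s) (𝓝[Ioo (0:ℝ) b] 0) (𝓝[Ioo (-b) b] 0) := by
            refine tendsto_nhdsWithin_iff.2 ⟨?_, ?_⟩
            · have := (continuous_neg.tendsto (0:ℝ)).mono_left (nhdsWithin_le_nhds (s := Ioo (0:ℝ) b))
              simpa using this
            · filter_upwards [self_mem_nhdsWithin] with x hx
              exact ⟨by linarith [hx.2], by linarith [hx.1, hb]⟩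
          have := (hDt.comp hneg_map).neg
          simpa using this)
        (fun s hs => by
          have := key2 (-s) (hsub (hmem s hs))
          show s * (-D (-s)) = M (-s)
          linear_combination this)
      intro s hs
      have hms : -s ∈ Ioo (0:ℝ) b := ⟨by linarith [hs.2], by linarith [hs.1]⟩
      have := h (-s) hms
      simpa using this
    intro s hs
    have hMs : M s = 0 := by
      rcases lt_trichotomy s 0 with h|h|h
      · exact hneg_side s ⟨hs.1, h⟩
      · rw [h]; exact hM0
      · exact hpos_side s ⟨h, hs.2⟩
    simp only [hMdef] at hMs
    linarith [hMs]
  · -- backward direction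
    rintro ⟨c₁, c₂, h⟩ s hs
    have hG : ∀ x ∈ Ioo (-b) b, deriv φ x = c₁ + c₂ * (-x / w x) := by
      intro x hx
      have hF : HasDerivAt (fun y => c₁ * y + c₂ * w y) (c₁ * 1 + c₂ * (-x / w x)) x :=
        ((hasDerivAt_id x).const_mul c₁).add ((hw_deriv x hx).const_mul c₂)
      have heq : φ =ᶠ[𝓝 x] fun y => c₁ * y + c₂ * w y := by
        filter_upwards [hIopen.mem_nhds hx] with y hy using h y hy
      rw [Filter.EventuallyEq.deriv_eq heq, hF.deriv]
      ring
    have hG2 : deriv (deriv φ) s = deriv (fun x => c₁ + c₂ * (-x / w x)) s := by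
      apply Filter.EventuallyEq.deriv_eq
      filter_upwards [hIopen.mem_nhds hs] with y hy using hG y hy
    have hwp := hw_pos s hs
    have hws := hw_sq s hs
    have hsecond : HasDerivAt (fun x => c₁ + c₂ * (-x / w x))
        (0 + c₂ * (((-1) * w s - (-s) * (-s / w s)) / w s ^ 2)) s := by
      exact (hasDerivAt_const s c₁).add
        ((((hasDerivAt_id s).neg).div (hw_deriv s hs) (ne_of_gt hwp)).const_mul c₂)
    rw [hG s hs, hG2, hsecond.deriv, h s hs, ← hws]
    rw [Real.sqrt_sq hwp.le]
    field_simp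
    ring
end

section
/- Let n ≥ 2, let x, y ∈ ℝⁿ with y ≠ 0, and let φ, φ_s, φ_ss be real numbers such that φ − sφ_s + (r²−s²)φ_ss = 0 (as happens for φ(r,s) = f₁(r)s + f₂(r)√(r²−s²)). Then the spherically symmetric metric matrix (g_{jk}) is singular: det(g_{jk}) = 0. The same conclusion holds when n ≥ 3 and φ − sφ_s = 0 (as happens for φ(r,s) = f(r)s), or when φ = 0. -/
open RealInnerProductSpace

lemma exists_orth2 {E : Type*} [NormedAddCommGroup E] [InnerProductSpace ℝ E]
    [FiniteDimensional ℝ E] (z w : E) (h : 2 < Module.finrank ℝ E) :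
    ∃ v : E, v ≠ 0 ∧ ⟪z, v⟫ = 0 ∧ ⟪w, v⟫ = 0 := by
  set K := Submodule.span ℝ ({z, w} : Set E) with hKdef
  have hK : Module.finrank ℝ K ≤ 2 := by
    classical
    refine (finrank_span_le_card (R := ℝ) ({z, w} : Set E)).trans ?_
    rw [Set.toFinset_insert, Set.toFinset_singleton]
    exact (Finset.card_insert_le _ _).trans (by simp)
  have hpos : 0 < Module.finrank ℝ Kᗮ := by
    have := K.finrank_add_finrank_orthogonal (𝕜 := ℝ)
    omega
  have hne : Kᗮ ≠ ⊥ := fun hbot => by rw [hbot, finrank_bot] at hpos; exact lt_irrefl 0 hpos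
  obtain ⟨v, hvK, hv0⟩ := Submodule.exists_mem_ne_zero_of_ne_bot hne
  refine ⟨v, hv0, ?_, ?_⟩
  · exact hvK z (Submodule.subset_span (by simp))
  · exact hvK w (Submodule.subset_span (by simp))

lemma exists_orth1 {E : Type*} [NormedAddCommGroup E] [InnerProductSpace ℝ E]
    [FiniteDimensional ℝ E] (z : E) (h : 1 < Module.finrank ℝ E) :
    ∃ v : E, v ≠ 0 ∧ ⟪z, v⟫ = 0 := by
  set K := Submodule.span ℝ ({z} : Set E)
  have hK : Module.finrank ℝ K ≤ 1 := by
    refine (finrank_span_le_card (R := ℝ) ({z} : Set E)).trans ?_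
    simp
  have hpos : 0 < Module.finrank ℝ Kᗮ := by
    have := K.finrank_add_finrank_orthogonal (𝕜 := ℝ)
    omega
  have hne : Kᗮ ≠ ⊥ := fun hbot => by rw [hbot, finrank_bot] at hpos; exact lt_irrefl 0 hpos
  obtain ⟨v, hvK, hv0⟩ := Submodule.exists_mem_ne_zero_of_ne_bot hne
  exact ⟨v, hv0, hvK z (Submodule.subset_span (by simp))⟩

/-- For n ≥ 2, if φ − sφ_s + (r²−s²)φ_ss = 0 then det(g_{jk}) = 0;
the same conclusion holds when n ≥ 3 and φ − sφ_s = 0, or when φ = 0. -/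
theorem stmt_19 (n : ℕ) (hn : 2 ≤ n) (x y : EuclideanSpace ℝ (Fin n)) (hy : y ≠ 0)
    (u r s φ φs φss : ℝ)
    (hu : u = ‖y‖) (hr : r = ‖x‖) (hs : s = ⟪x, y⟫ / u)
    (σ0 σ1 σ2 σ3 : ℝ)
    (hσ0 : σ0 = φ * (φ - s * φs))
    (hσ1 : σ1 = φs ^ 2 + φ * φss)
    (hσ2 : σ2 = (φ - s * φs) * φs - s * φ * φss)
    (hσ3 : σ3 = s ^ 2 * φ * φss - s * (φ - s * φs) * φs)
    (g : Matrix (Fin n) (Fin n) ℝ)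
    (hg : ∀ j k, g j k = σ0 * (if j = k then 1 else 0) + σ1 * x j * x k +
      σ2 / u * (x j * y k + x k * y j) + σ3 / u ^ 2 * (y j * y k)) :
    (φ - s * φs + (r ^ 2 - s ^ 2) * φss = 0 → g.det = 0) ∧
    (3 ≤ n → φ - s * φs = 0 → g.det = 0) ∧
    (φ = 0 → g.det = 0) := by
  have hu0 : u ≠ 0 := by rw [hu]; exact norm_ne_zero_iff.mpr hy
  have hfr : 1 < Module.finrank ℝ (EuclideanSpace ℝ (Fin n)) := by
    rw [finrank_euclideanSpace, Fintype.card_fin]; omega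
  have hxx : (∑ k, x k * x k) = r ^ 2 := by
    rw [hr, ← real_inner_self_eq_norm_sq]
    simp only [PiLp.inner_apply, RCLike.inner_apply, conj_trivial, mul_comm]
  have hyy : (∑ k, y k * y k) = u ^ 2 := by
    rw [hu, ← real_inner_self_eq_norm_sq]
    simp only [PiLp.inner_apply, RCLike.inner_apply, conj_trivial, mul_comm]
  have hxy : (∑ k, x k * y k) = s * u := by
    have h1 : ⟪x, y⟫ = s * u := by rw [hs]; field_simp
    rw [← h1]; simp [PiLp.inner_apply, RCLike.inner_apply, mul_comm]
  have hmul : ∀ (v : EuclideanSpace ℝ (Fin n)) (j : Fin n),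
      g.mulVec v j = σ0 * v j
        + (σ1 * (∑ k, x k * v k) + σ2 / u * (∑ k, y k * v k)) * x j
        + (σ2 / u * (∑ k, x k * v k) + σ3 / u ^ 2 * (∑ k, y k * v k)) * y j := by
    intro v j
    simp only [Matrix.mulVec, dotProduct]
    calc (∑ k, g j k * v k)
        = ∑ k, (σ0 * (if j = k then 1 else 0) * v k
            + ((σ1 * (x k * v k) + σ2 / u * (y k * v k)) * x j
            + (σ2 / u * (x k * v k) + σ3 / u ^ 2 * (y k * v k)) * y j)) :=
          Finset.sum_congr rfl (fun k _ => by rw [hg]; ring)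
      _ = _ := by
          have hδ : ∑ k, σ0 * (if j = k then 1 else 0) * v k = σ0 * v j := by
            simp [mul_ite, mul_one, mul_zero, ite_mul, zero_mul, Finset.sum_ite_eq]
          rw [Finset.sum_add_distrib, hδ, Finset.sum_add_distrib, ← Finset.sum_mul,
            ← Finset.sum_mul, Finset.sum_add_distrib, Finset.sum_add_distrib,
            ← Finset.mul_sum, ← Finset.mul_sum, ← Finset.mul_sum, ← Finset.mul_sum, ← add_assoc]
  have main : ∀ v : EuclideanSpace ℝ (Fin n), v ≠ 0 →
      (∀ j, σ0 * v j
        + (σ1 * (∑ k, x k * v k) + σ2 / u * (∑ k, y k * v k)) * x j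
        + (σ2 / u * (∑ k, x k * v k) + σ3 / u ^ 2 * (∑ k, y k * v k)) * y j = 0) →
      g.det = 0 := by
    intro v hv h
    rw [← Matrix.exists_mulVec_eq_zero_iff]
    refine ⟨v, fun h0 => hv (by ext i; simp [h0]), ?_⟩
    funext j
    rw [Pi.zero_apply, hmul v j, h j]
  subst hσ0 hσ1 hσ2 hσ3
  -- Part 3 : φ = 0
  have part3 : φ = 0 → g.det = 0 := by
    intro hφ
    obtain ⟨v, hv0, hvz⟩ := exists_orth1 (x - (s / u) • y : EuclideanSpace ℝ (Fin n)) hfr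
    have hz : (∑ k, x k * v k) = s / u * (∑ k, y k * v k) := by
      have hvz' : (∑ k, (x k - s / u * y k) * v k) = 0 := by
        rw [← hvz]
        simp [PiLp.inner_apply, RCLike.inner_apply, PiLp.sub_apply, PiLp.smul_apply,
          smul_eq_mul, mul_comm]
      have h2 : (∑ k, x k * v k) - s / u * (∑ k, y k * v k)
          = ∑ k, (x k - s / u * y k) * v k := by
        rw [Finset.mul_sum, ← Finset.sum_sub_distrib]
        exact Finset.sum_congr rfl (fun k _ => by ring)
      have := h2.trans hvz'
      linarith
    refine main v hv0 (fun j => ?_)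
    rw [hz, hφ]
    field_simp
    ring
  refine ⟨?_, ?_, part3⟩
  · -- Part 1
    intro hC
    by_cases hφ : φ = 0
    · exact part3 hφ
    by_cases hsφ : φ - s * φs = 0
    · have hq : (r ^ 2 - s ^ 2) * φss = 0 := by linarith
      by_cases hss : φss = 0
      · obtain ⟨v, hv0, hvx⟩ := exists_orth1 x hfr
        have hX : (∑ k, x k * v k) = 0 := by
          rw [← hvx]; simp [PiLp.inner_apply, RCLike.inner_apply, mul_comm]
        refine main v hv0 (fun j => ?_)
        rw [hX, hsφ, hss]
        ring
      · have hq2 : r ^ 2 - s ^ 2 = 0 := by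
          rcases mul_eq_zero.mp hq with h | h
          · exact h
          · exact absurd h hss
        obtain ⟨v, hv0, hvy⟩ := exists_orth1 y hfr
        have hY : (∑ k, y k * v k) = 0 := by
          rw [← hvy]; simp [PiLp.inner_apply, RCLike.inner_apply, mul_comm]
        have hxc : ∀ k, x k = s / u * y k := by
          have hzero : (∑ k, (x k - s / u * y k) ^ 2) = 0 := by
            have hexp : (∑ k, (x k - s / u * y k) ^ 2)
                = (∑ k, x k * x k) - 2 * (s / u) * (∑ k, x k * y k)
                  + (s / u) ^ 2 * (∑ k, y k * y k) := by
              rw [Finset.mul_sum, Finset.mul_sum, ← Finset.sum_sub_distrib,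
                ← Finset.sum_add_distrib]
              exact Finset.sum_congr rfl (fun k _ => by ring)
            rw [hexp, hxx, hxy, hyy]
            field_simp
            linear_combination hq2
          intro k
          have hk : (x k - s / u * y k) ^ 2 = 0 := by
            have := (Finset.sum_eq_zero_iff_of_nonneg
              (fun i _ => sq_nonneg (x i - s / u * y i))).mp hzero k (Finset.mem_univ k)
            exact this
          have := pow_eq_zero_iff (n := 2) (by norm_num) |>.mp hk
          linarith
        have hX : (∑ k, x k * v k) = 0 := by
          calc (∑ k, x k * v k) = ∑ k, s / u * (y k * v k) :=
                Finset.sum_congr rfl (fun k _ => by rw [hxc k]; ring)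
            _ = s / u * ∑ k, y k * v k := (Finset.mul_sum _ _ _).symm
            _ = 0 := by rw [hY, mul_zero]
        refine main v hv0 (fun j => ?_)
        rw [hX, hY, hsφ]
        ring
    · -- generic case
      have hqne : r ^ 2 - s ^ 2 ≠ 0 := by
        intro h
        apply hsφ
        have := hC
        rw [h, zero_mul, add_zero] at this
        exact this
      set a : ℝ := φ * (φ - s * φs) with ha
      set b : ℝ := -((r ^ 2 - s ^ 2) * ((φ - s * φs) * φs - s * φ * φss)) / u with hb
      have hane : a ≠ 0 := mul_ne_zero hφ hsφ
      set v : EuclideanSpace ℝ (Fin n) := WithLp.toLp 2 (fun k => a * x k + b * y k) with hv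
      have hvk : ∀ k, v k = a * x k + b * y k := fun k => rfl
      have hX : (∑ k, x k * v k) = a * r ^ 2 + b * (s * u) := by
        calc (∑ k, x k * v k) = ∑ k, (a * (x k * x k) + b * (x k * y k)) :=
              Finset.sum_congr rfl (fun k _ => by rw [hvk k]; ring)
          _ = a * (∑ k, x k * x k) + b * (∑ k, x k * y k) := by
              rw [Finset.sum_add_distrib, ← Finset.mul_sum, ← Finset.mul_sum]
          _ = _ := by rw [hxx, hxy]
      have hY : (∑ k, y k * v k) = a * (s * u) + b * u ^ 2 := by
        calc (∑ k, y k * v k) = ∑ k, (a * (x k * y k) + b * (y k * y k)) :=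
              Finset.sum_congr rfl (fun k _ => by rw [hvk k]; ring)
          _ = a * (∑ k, x k * y k) + b * (∑ k, y k * y k) := by
              rw [Finset.sum_add_distrib, ← Finset.mul_sum, ← Finset.mul_sum]
          _ = _ := by rw [hxy, hyy]
      have hv0 : v ≠ 0 := by
        intro h0
        have hxk : ∀ k, x k = -(b / a) * y k := by
          intro k
          have hk : a * x k + b * y k = 0 := by rw [← hvk k, h0]; rfl
          field_simp
          linarith [hk]
        have hr2 : r ^ 2 = (b / a) ^ 2 * u ^ 2 := by
          rw [← hxx, ← hyy, Finset.mul_sum]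
          exact Finset.sum_congr rfl (fun k _ => by rw [hxk k]; ring)
        have hsu : s * u = -(b / a) * u ^ 2 := by
          rw [← hxy, ← hyy, Finset.mul_sum]
          exact Finset.sum_congr rfl (fun k _ => by rw [hxk k]; ring)
        apply hqne
        have hseq : s = -(b / a) * u := by
          refine mul_right_cancel₀ hu0 ?_
          rw [hsu]; ring
        rw [hr2, hseq]
        ring
      refine main v hv0 (fun j => ?_)
      rw [hX, hY, hvk j]
      have hA : a * a + (φs ^ 2 + φ * φss) * (a * r ^ 2 + b * (s * u))
          + ((φ - s * φs) * φs - s * φ * φss) / u * (a * (s * u) + b * u ^ 2) = 0 := by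
        rw [ha, hb]
        field_simp
        linear_combination φ ^ 3 * hC
      have hB : a * b + ((φ - s * φs) * φs - s * φ * φss) / u * (a * r ^ 2 + b * (s * u))
          + (s ^ 2 * φ * φss - s * (φ - s * φs) * φs) / u ^ 2 * (a * (s * u) + b * u ^ 2) = 0 := by
        rw [ha, hb]
        field_simp
        ring
      linear_combination (x j) * hA + (y j) * hB
  · -- Part 2
    intro h3 hφ
    have hfr3 : 2 < Module.finrank ℝ (EuclideanSpace ℝ (Fin n)) := by
      rw [finrank_euclideanSpace, Fintype.card_fin]; omega
    obtain ⟨v, hv0, hvx, hvy⟩ := exists_orth2 x y hfr3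
    have hX : (∑ k, x k * v k) = 0 := by
      rw [← hvx]; simp [PiLp.inner_apply, RCLike.inner_apply, mul_comm]
    have hY : (∑ k, y k * v k) = 0 := by
      rw [← hvy]; simp [PiLp.inner_apply, RCLike.inner_apply, mul_comm]
    refine main v hv0 (fun j => ?_)
    rw [hX, hY, hφ]
    ring
end
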